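/- arXiv:1603.02534 — 5 statements merged into one kernel-verified Lean document; each statement's English description precedes it below -/
import Mathlib

section
/- Let B_r be an open ball in ℝ^n of radius r > 0 with B_r ∩ G ≠ ∅. Let h ∈ ℤ be the minimum integer such that B_r ∩ G_h ≠ ∅, and let k ∈ ℤ be such that k ≥ h + 3 and B_r ∩ G̃_k ≠ ∅. Then |2^{−(h+3)} − 2^{−k}| ≤ r(M+1). -/
open MeasureTheory Metric Set
open scoped ENNReal NNReal Classical

noncomputable section

/-- `ℝⁿ` with `n = (dim) ≥ 2` modeled as `EuclideanSpace ℝ (Fin (n+1))`. -/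
abbrev EucX (n : ℕ) := EuclideanSpace ℝ (Fin (n+1))
/-- `ℝ^{n-1}` modeled as `EuclideanSpace ℝ (Fin n)`. -/
abbrev EucY (n : ℕ) := EuclideanSpace ℝ (Fin n)

variable {n : ℕ}

/-- `x̄`, the first `n-1` coordinates of a point of `ℝⁿ`. -/
def barX (x : EucX n) : EucY n := WithLp.toLp 2 (fun i : Fin n => x i.castSucc)
/-- `x_n`, the last coordinate of a point of `ℝⁿ`. -/
def lastX (x : EucX n) : ℝ := x (Fin.last n)
/-- `ρ_n(x) = x_n - φ(x̄)`. -/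
def rhoN (φ : EucY n → ℝ) (x : EucX n) : ℝ := lastX x - φ (barX x)
/-- The elementary Lipschitz domain `Ω = {x : x_n < φ(x̄)}`. -/
def OmSet (φ : EucY n → ℝ) : Set (EucX n) := {x | lastX x < φ (barX x)}
/-- `G = ℝⁿ \ closure Ω`. -/
def GSet (φ : EucY n → ℝ) : Set (EucX n) := (closure (OmSet φ))ᶜ
/-- `G_k = {x ∈ G : 2^{-k-1} < ρ_n(x) ≤ 2^{-k}}`. -/
def GkSet (φ : EucY n → ℝ) (k : ℤ) : Set (EucX n) :=
  {x ∈ GSet φ | (2:ℝ) ^ (-k-1) < rhoN φ x ∧ rhoN φ x ≤ (2:ℝ) ^ (-k)}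
/-- `G̃_k = {x ∈ G : 2^{-k-2} < ρ_n(x) ≤ 2^{-k+1}}`. -/
def tGkSet (φ : EucY n → ℝ) (k : ℤ) : Set (EucX n) :=
  {x ∈ GSet φ | (2:ℝ) ^ (-k-2) < rhoN φ x ∧ rhoN φ x ≤ (2:ℝ) ^ (-k+1)}

lemma lastX_lip (x y : EucX n) : |lastX x - lastX y| ≤ dist x y := by
  have h := EuclideanSpace.dist_eq x y
  have h1 : dist (x (Fin.last n)) (y (Fin.last n)) ^ 2 ≤ ∑ i, dist (x i) (y i) ^ 2 :=
    Finset.single_le_sum (f := fun i => dist (x i) (y i) ^ 2)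
      (fun i _ => sq_nonneg _) (Finset.mem_univ _)
  have := Real.sqrt_le_sqrt h1
  rw [Real.sqrt_sq dist_nonneg] at this
  rw [h]
  simpa [lastX, Real.dist_eq] using this

lemma barX_lip (x y : EucX n) : dist (barX x) (barX y) ≤ dist x y := by
  rw [EuclideanSpace.dist_eq, EuclideanSpace.dist_eq]
  apply Real.sqrt_le_sqrt
  rw [Fin.sum_univ_castSucc]
  have : 0 ≤ dist (x (Fin.last n)) (y (Fin.last n)) ^ 2 := sq_nonneg _
  simp only [barX, PiLp.toLp_apply]
  linarith

/-- `rhoN` is `(M+1)`-Lipschitz. -/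
lemma rhoN_lip (M : ℝ) (hM : 0 ≤ M) (φ : EucY n → ℝ)
    (hφ : ∀ x y : EucY n, |φ x - φ y| ≤ M * dist x y) (x y : EucX n) :
    rhoN φ x - rhoN φ y ≤ (M + 1) * dist x y := by
  have h1 : |lastX x - lastX y| ≤ dist x y := lastX_lip x y
  have h2 : |φ (barX y) - φ (barX x)| ≤ M * dist (barX y) (barX x) := hφ _ _
  have h3 : dist (barX y) (barX x) ≤ dist x y := by
    rw [dist_comm]; exact barX_lip x y
  have h4 : M * dist (barX y) (barX x) ≤ M * dist x y :=
    mul_le_mul_of_nonneg_left h3 hM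
  have hx := abs_le.mp h1
  have hy := abs_le.mp h2
  simp only [rhoN]
  linarith

/-- Lemma 2.2: if `B_r ∩ G ≠ ∅`, `h` is the minimum integer with
`B_r ∩ G_h ≠ ∅`, `k ≥ h+3` and `B_r ∩ G̃_k ≠ ∅`, then `|2^{-(h+3)} - 2^{-k}| ≤ r(M+1)`. -/
theorem statement0 (n : ℕ) (hn : 1 ≤ n) (M : ℝ) (hM : 0 ≤ M) (φ : EucY n → ℝ)
    (hφ : ∀ x y : EucY n, |φ x - φ y| ≤ M * dist x y)
    (x₀ : EucX n) (r : ℝ) (hr : 0 < r)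
    (hG : (ball x₀ r ∩ GSet φ).Nonempty)
    (h k : ℤ)
    (hh : (ball x₀ r ∩ GkSet φ h).Nonempty)
    (hmin : ∀ j : ℤ, (ball x₀ r ∩ GkSet φ j).Nonempty → h ≤ j)
    (hk : h + 3 ≤ k)
    (hk' : (ball x₀ r ∩ tGkSet φ k).Nonempty) :
    |(2:ℝ) ^ (-(h+3)) - (2:ℝ) ^ (-k)| ≤ r * (M + 1) := by
  obtain ⟨x, hxB, -, hxlo, -⟩ := hh
  obtain ⟨y, hyB, -, -, hyhi⟩ := hk'
  have one_le_two : (1:ℝ) ≤ 2 := one_le_two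
  -- ρ(y) ≤ 2^{-k+1} ≤ 2^{-h-2}
  have hmono : (2:ℝ) ^ (-k+1) ≤ (2:ℝ) ^ (-h-2) :=
    zpow_le_zpow_right₀ one_le_two (by omega)
  -- distance bound
  have hd : dist x y < 2 * r := by
    have h1 : dist x x₀ < r := mem_ball.mp hxB
    have h2 : dist x₀ y < r := by rw [dist_comm]; exact mem_ball.mp hyB
    calc dist x y ≤ dist x x₀ + dist x₀ y := dist_triangle _ _ _
      _ < 2 * r := by linarith
  have hlip : rhoN φ x - rhoN φ y ≤ (M + 1) * dist x y := rhoN_lip M hM φ hφ x y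
  have hMd : (M + 1) * dist x y < (M + 1) * (2 * r) := by
    apply mul_lt_mul_of_pos_left hd; linarith
  -- 2^{-h-2} < ρ(x) - ρ(y)
  have key : (2:ℝ) ^ (-h-2) < rhoN φ x - rhoN φ y := by
    have h21 : (2:ℝ) ^ (-h-1) = (2:ℝ) ^ (-h-2) * 2 := by
      rw [← zpow_add_one₀ (two_ne_zero : (2:ℝ) ≠ 0)]; congr 1; ring
    have hy2 : rhoN φ y ≤ (2:ℝ) ^ (-h-2) := le_trans hyhi hmono
    have : (2:ℝ) ^ (-h-2) * 2 - (2:ℝ) ^ (-h-2) < rhoN φ x - rhoN φ y := by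
      rw [← h21]; linarith
    linarith
  -- hence 2^{-h-3} < r(M+1)
  have h32 : (2:ℝ) ^ (-h-2) = (2:ℝ) ^ (-(h+3)) * 2 := by
    rw [← zpow_add_one₀ (two_ne_zero : (2:ℝ) ≠ 0)]; congr 1; ring
  have hfin : (2:ℝ) ^ (-(h+3)) * 2 < (M + 1) * (2 * r) := by
    rw [← h32]; linarith
  have hkk : (2:ℝ) ^ (-k) ≤ (2:ℝ) ^ (-(h+3)) :=
    zpow_le_zpow_right₀ one_le_two (by omega)
  have hkpos : (0:ℝ) < (2:ℝ) ^ (-k) := zpow_pos two_pos _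
  rw [abs_of_nonneg (by linarith)]
  linarith
end
end

section
/- Let B_r be an open ball in ℝ^n of radius r > 0 with B_r ∩ G ≠ ∅, let h ∈ ℤ be the minimum integer such that B_r ∩ G_h ≠ ∅, and let E > 0. Then there exists K ∈ ℕ depending only on n, M and E such that for every η ∈ ℝ^n with |η| < E there exist K points x_η^{(1)}, …, x_η^{(K)} ∈ ℝ^n with ⋃_{k=h+3}^{∞} ( (B_r ∩ G̃_k) − 2^{−k}η ) ⊂ ⋃_{i=1}^{K} B_r(x_η^{(i)}), where each B_r(x_η^{(i)}) is a ball of radius r. -/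
open MeasureTheory Metric Set
open scoped ENNReal NNReal Classical

noncomputable section

variable {n : ℕ}

lemma rho_lip {n : ℕ} {M : ℝ} (hM : 0 ≤ M) (φ : EucY n → ℝ)
    (hφ : ∀ x y : EucY n, |φ x - φ y| ≤ M * dist x y) (x y : EucX n) :
    rhoN φ y - rhoN φ x ≤ (1 + M) * dist x y := by
  have hbar : dist (barX x) (barX y) ≤ dist x y := by
    rw [EuclideanSpace.dist_eq, EuclideanSpace.dist_eq]
    apply Real.sqrt_le_sqrt
    rw [Fin.sum_univ_castSucc]
    have h1 : ∑ i : Fin n, dist (barX x i) (barX y i) ^ 2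
        = ∑ i : Fin n, dist (x i.castSucc) (y i.castSucc) ^ 2 := rfl
    rw [h1]
    have : (0:ℝ) ≤ dist (x (Fin.last n)) (y (Fin.last n)) ^ 2 := by positivity
    linarith
  have hlast : |lastX y - lastX x| ≤ dist x y := by
    rw [EuclideanSpace.dist_eq]
    have h1 : |lastX y - lastX x| = Real.sqrt (dist (x (Fin.last n)) (y (Fin.last n)) ^ 2) := by
      rw [Real.sqrt_sq_eq_abs, Real.dist_eq, abs_abs, abs_sub_comm]
      rfl
    rw [h1]
    apply Real.sqrt_le_sqrt
    exact Finset.single_le_sum (f := fun i => dist (x i) (y i) ^ 2)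
      (fun i _ => by positivity) (Finset.mem_univ _)
  have hphi : |φ (barX x) - φ (barX y)| ≤ M * dist x y :=
    le_trans (hφ _ _) (mul_le_mul_of_nonneg_left hbar hM)
  have : rhoN φ y - rhoN φ x = (lastX y - lastX x) + (φ (barX x) - φ (barX y)) := by
    simp [rhoN]; ring
  rw [this]
  have := abs_le.mp hlast
  have := abs_le.mp hphi
  nlinarith [dist_nonneg (x := x) (y := y)]

/-- Lemma 2.3, second part: there is `K ∈ ℕ` depending only on `n, M, E`
such that for every `η` with `|η| < E` the union `⋃_{k ≥ h+3} ((B_r ∩ G̃_k) - 2^{-k}η)`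
can be covered by `K` balls of radius `r`. -/
theorem statement2 (n : ℕ) (hn : 1 ≤ n) (M E : ℝ) (hM : 0 ≤ M) (hE : 0 < E) :
    ∃ K : ℕ,
      ∀ (φ : EucY n → ℝ),
        (∀ x y : EucY n, |φ x - φ y| ≤ M * dist x y) →
        ∀ (x₀ : EucX n) (r : ℝ), 0 < r →
        (ball x₀ r ∩ GSet φ).Nonempty →
        ∀ h : ℤ, (ball x₀ r ∩ GkSet φ h).Nonempty →
        (∀ j : ℤ, (ball x₀ r ∩ GkSet φ j).Nonempty → h ≤ j) →
        ∀ η : EucX n, ‖η‖ < E →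
        ∃ ctr : Fin K → EucX n,
          (⋃ (k : ℤ) (_ : h + 3 ≤ k),
              (fun x => x - (2:ℝ) ^ (-k) • η) '' (ball x₀ r ∩ tGkSet φ k))
            ⊆ ⋃ i : Fin K, ball (ctr i) r := by
  classical
  set R : ℝ := 1 + (1 + M) * E with hR
  have hR1 : (1:ℝ) ≤ R := by
    have : 0 ≤ (1 + M) * E := by positivity
    simp [hR]; linarith
  obtain ⟨t, ht⟩ : ∃ t : Finset (EucX n),
      closedBall (0 : EucX n) R ⊆ ⋃ c ∈ t, ball c (1/2) := by
    apply (isCompact_closedBall (0 : EucX n) R).elim_finite_subcover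
      (fun c : EucX n => ball c (1/2)) (fun _ => isOpen_ball)
    exact fun x _ => mem_iUnion.2 ⟨x, mem_ball_self (by norm_num)⟩
  refine ⟨t.card, ?_⟩
  intro φ hφ x₀ r hr _ h hGh _ η hη
  refine ⟨fun i => x₀ + r • ((t.equivFin.symm i : EucX n)), ?_⟩
  intro z hz
  simp only [mem_iUnion] at hz
  obtain ⟨k, hk, x, hxmem, rfl⟩ := hz
  obtain ⟨hxball, _, hx1, hx2⟩ := hxmem
  obtain ⟨y, hyball, _, hy1, _⟩ := hGh
  -- key bound : 2^(-k) < (1+M)*r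
  have hM1 : (0:ℝ) < 1 + M := by linarith
  have hdxy : dist x y < 2 * r := by
    have := mem_ball.mp hxball
    have := mem_ball.mp hyball
    calc dist x y ≤ dist x x₀ + dist y x₀ := dist_triangle_right _ _ _
    _ < 2 * r := by linarith
  have hlip := rho_lip hM φ hφ x y
  have e1 : (2:ℝ) ^ (-k+1) ≤ (2:ℝ) ^ (-h-2) := by
    apply zpow_le_zpow_right₀ one_le_two; omega
  have e2 : (2:ℝ) ^ (-k) ≤ (2:ℝ) ^ (-h-3) := by
    apply zpow_le_zpow_right₀ one_le_two; omega
  have e3 : (2:ℝ) ^ (-h-1) = 2 * (2:ℝ) ^ (-h-2) := by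
    rw [show (-h-1) = (-h-2)+1 by ring, zpow_add_one₀ (two_ne_zero)]; ring
  have e4 : (2:ℝ) ^ (-h-2) = 2 * (2:ℝ) ^ (-h-3) := by
    rw [show (-h-2) = (-h-3)+1 by ring, zpow_add_one₀ (two_ne_zero)]; ring
  have key : (2:ℝ) ^ (-k) < (1 + M) * r := by
    have h5 : rhoN φ y - rhoN φ x ≤ (1 + M) * (2 * r) := by
      have := mul_le_mul_of_nonneg_left hdxy.le hM1.le
      nlinarith [dist_nonneg (x := x) (y := y)]
    nlinarith
  have hzpos : (0:ℝ) < (2:ℝ) ^ (-k) := by positivity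
  -- z is in the big ball
  have hzball : x - (2:ℝ) ^ (-k) • η ∈ ball x₀ (R * r) := by
    rw [mem_ball]
    calc dist (x - (2:ℝ) ^ (-k) • η) x₀
        ≤ dist (x - (2:ℝ) ^ (-k) • η) x + dist x x₀ := dist_triangle _ _ _
      _ = ‖(2:ℝ) ^ (-k) • η‖ + dist x x₀ := by
          rw [dist_eq_norm,
            show x - (2:ℝ) ^ (-k) • η - x = -((2:ℝ) ^ (-k) • η) by abel, norm_neg]
      _ < (1 + M) * r * E + r := by
          have hb := mem_ball.mp hxball
          have : ‖(2:ℝ) ^ (-k) • η‖ = (2:ℝ) ^ (-k) * ‖η‖ := by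
            rw [norm_smul, Real.norm_eq_abs, abs_of_pos hzpos]
          rw [this]
          have h6 : (2:ℝ) ^ (-k) * ‖η‖ < (1 + M) * r * E := by
            rcases eq_or_lt_of_le (norm_nonneg η) with hη0 | hη0
            · rw [← hη0, mul_zero]; positivity
            · calc (2:ℝ) ^ (-k) * ‖η‖ < ((1+M)*r) * ‖η‖ := by
                    exact mul_lt_mul_of_pos_right key hη0
                _ < (1+M)*r*E := by
                    apply mul_lt_mul_of_pos_left hη
                    positivity
          linarith
      _ ≤ R * r := by rw [hR]; nlinarith
  set z := x - (2:ℝ) ^ (-k) • η with hzdef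
  have hw : r⁻¹ • (z - x₀) ∈ closedBall (0 : EucX n) R := by
    rw [mem_closedBall, dist_zero_right, norm_smul, Real.norm_eq_abs,
      abs_of_pos (inv_pos.mpr hr)]
    have := mem_ball.mp hzball
    rw [dist_eq_norm] at this
    rw [inv_mul_le_iff₀ hr]
    linarith [this]
  obtain ⟨c, hct, hc⟩ : ∃ c ∈ t, r⁻¹ • (z - x₀) ∈ ball c (1/2) := by
    have := ht hw
    simpa using this
  refine mem_iUnion.2 ⟨t.equivFin ⟨c, hct⟩, ?_⟩
  have hcoe : ((t.equivFin.symm (t.equivFin ⟨c, hct⟩) : EucX n)) = c := by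
    simp
  rw [mem_ball]
  show dist z (x₀ + r • ((t.equivFin.symm (t.equivFin ⟨c, hct⟩) : EucX n))) < r
  rw [hcoe, dist_eq_norm]
  have hzx : z - (x₀ + r • c) = r • (r⁻¹ • (z - x₀) - c) := by
    rw [smul_sub, smul_smul, mul_inv_cancel₀ hr.ne', one_smul]; abel
  rw [hzx, norm_smul, Real.norm_eq_abs, abs_of_pos hr]
  have := mem_ball.mp hc
  rw [dist_eq_norm] at this
  nlinarith
end
end

section
/- For every k ∈ ℤ and every z = (z̄, z_n) ∈ ℝ^n with |z| < 1 and z_n > 1/2, the translated set G̃_k − 2^{−k}(z̄, A z_n) is contained in Ω̃_k; that is, if x ∈ G satisfies 2^{−k−2} < x_n − φ(x̄) ≤ 2^{−k+1}, then the point (x̄ − 2^{−k} z̄, x_n − A·2^{−k} z_n) lies in Ω and 2^{−k−2} < φ(x̄ − 2^{−k} z̄) − (x_n − A·2^{−k} z_n) < b·2^{−k+1}. -/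
open MeasureTheory Metric Set
open scoped ENNReal NNReal Classical

noncomputable section

variable {n : ℕ}

/-- The reflected point `(x̄ - 2^{-k} z̄, x_n - A·2^{-k} z_n)`. -/
def shiftPt (A : ℝ) (k : ℤ) (x z : EucX n) : EucX n :=
  WithLp.toLp 2 (fun i => if i = Fin.last n then x i - A * (2:ℝ) ^ (-k) * z i else x i - (2:ℝ) ^ (-k) * z i)

/-- inclusion (2.8): with `A = 16(M+1)` and `b = 10A`, for every `k ∈ ℤ` and
every `z` with `|z| < 1`, `z_n > 1/2`, if `x ∈ G` satisfies `2^{-k-2} < ρ_n(x) ≤ 2^{-k+1}`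
then the reflected point `x̃ = (x̄ - 2^{-k} z̄, x_n - A·2^{-k} z_n)` lies in `Ω` and
`2^{-k-2} < φ(x̃̄) - x̃_n < b·2^{-k+1}`. -/
theorem statement3 (n : ℕ) (hn : 1 ≤ n) (M : ℝ) (hM : 0 ≤ M) (φ : EucY n → ℝ)
    (hφ : ∀ x y : EucY n, |φ x - φ y| ≤ M * dist x y)
    (A b : ℝ) (hA : A = 16 * (M + 1)) (hb : b = 10 * A)
    (k : ℤ) (z : EucX n) (hz : ‖z‖ < 1) (hzn : 1/2 < lastX z)
    (x : EucX n) (hx : x ∈ tGkSet φ k) :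
    shiftPt A k x z ∈ OmSet φ ∧
      (2:ℝ) ^ (-k-2) < φ (barX (shiftPt A k x z)) - lastX (shiftPt A k x z) ∧
      φ (barX (shiftPt A k x z)) - lastX (shiftPt A k x z) < b * (2:ℝ) ^ (-k+1) := by

  obtain ⟨hxG, hr1, hr2⟩ := hx
  set t : ℝ := (2:ℝ)^(-k) with ht
  have ht0 : 0 < t := by positivity
  have e1 : (2:ℝ)^(-k-2) = t/4 := by
    rw [ht, zpow_sub₀ (by norm_num : (2:ℝ) ≠ 0)]; norm_num
  have e2 : (2:ℝ)^(-k+1) = 2*t := by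
    rw [ht, zpow_add₀ (by norm_num : (2:ℝ) ≠ 0)]; ring
  rw [e1] at hr1; rw [e2] at hr2
  have hlast : lastX (shiftPt A k x z) = lastX x - A * t * lastX z := by
    simp [lastX, shiftPt, ht]
  have hbar : barX (shiftPt A k x z) = barX x - t • barX z := by
    ext i
    have hne : (i.castSucc : Fin (n+1)) ≠ Fin.last n := (Fin.castSucc_lt_last i).ne
    simp [barX, shiftPt, hne, ht]
  have hznorm : ‖barX z‖ ≤ ‖z‖ := by
    rw [EuclideanSpace.norm_eq, EuclideanSpace.norm_eq]
    apply Real.sqrt_le_sqrt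
    rw [Fin.sum_univ_castSucc]
    have h0 : (0:ℝ) ≤ ‖z (Fin.last n)‖ ^ 2 := by positivity
    simp only [barX, WithLp.ofLp_toLp]
    linarith
  have hzl : |lastX z| ≤ ‖z‖ := by
    have : |lastX z| = Real.sqrt (‖z (Fin.last n)‖^2) := by
      rw [Real.sqrt_sq_eq_abs, abs_norm]; simp [lastX, Real.norm_eq_abs]
    rw [this, EuclideanSpace.norm_eq]
    apply Real.sqrt_le_sqrt
    exact Finset.single_le_sum (f := fun i => ‖z i‖^2) (fun i _ => by positivity) (Finset.mem_univ _)
  have hzl1 : lastX z < 1 := lt_of_le_of_lt ((le_abs_self _).trans hzl) hz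
  have hdist : dist (barX (shiftPt A k x z)) (barX x) ≤ t := by
    rw [hbar, dist_eq_norm]
    have : barX x - t • barX z - barX x = -(t • barX z) := by abel
    rw [this, norm_neg, norm_smul, Real.norm_eq_abs, abs_of_pos ht0]
    nlinarith [norm_nonneg (barX z), (hznorm.trans hz.le)]
  have hd := (hφ (barX (shiftPt A k x z)) (barX x)).trans
    (by nlinarith [abs_nonneg (φ (barX (shiftPt A k x z)) - φ (barX x))] :
      M * dist (barX (shiftPt A k x z)) (barX x) ≤ M * t)
  rw [abs_le] at hd
  have hρ : rhoN φ x = lastX x - φ (barX x) := rfl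
  rw [hρ] at hr1 hr2
  have hAt0 : 0 < A * t := by rw [hA]; positivity
  have h2 : A * t = 16 * (M + 1) * t := by rw [hA]
  have h1 : A * t * (1/2) ≤ A * t * lastX z :=
    mul_le_mul_of_nonneg_left hzn.le hAt0.le
  have h4 : A * t * lastX z ≤ A * t * 1 :=
    mul_le_mul_of_nonneg_left hzl1.le hAt0.le
  have h3 : b * (2 * t) = 320 * (M + 1) * t := by rw [hb, hA]; ring
  have hMt : 0 ≤ M * t := mul_nonneg hM ht0.le
  have key1 : t/4 < φ (barX (shiftPt A k x z)) - lastX (shiftPt A k x z) := by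
    rw [hlast]
    linarith [hd.1]
  have key2 : φ (barX (shiftPt A k x z)) - lastX (shiftPt A k x z) < b * (2*t) := by
    rw [hlast]
    linarith [hd.2]
  refine ⟨?_, by rwa [e1], by rwa [e2]⟩
  simp only [OmSet, Set.mem_setOf_eq]
  linarith
end
end

section
/- Let w : (0,∞) → (0,∞). There exists c > 0 (depending only on n, l, p, M, ω and in particular independent of δ) such that ‖Tf‖_{M^{w,δ}_p(ℝ^n)} ≤ c ‖f‖_{M^{w,δ}_p(Ω)} for all δ ∈ (0,∞] and all f ∈ W^{l,p}(Ω). -/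
open MeasureTheory Metric Set
open scoped ENNReal NNReal Classical

noncomputable section

variable {n : ℕ}

/-- `Ω̃_k = {x ∈ Ω : 2^{-k-2} < |ρ_n(x)| ≤ b 2^{-k+1}}`, where `b = 10A = 160(M+1)`. -/
def tOmSet (φ : EucY n → ℝ) (M : ℝ) (k : ℤ) : Set (EucX n) :=
  {x ∈ OmSet φ | (2:ℝ) ^ (-k-2) < |rhoN φ x| ∧
    |rhoN φ x| ≤ (10 * (16 * (M + 1))) * (2:ℝ) ^ (-k+1)}

/-- First-order partial derivative in the `i`-th coordinate direction. -/
def pdCoord (i : Fin (n+1)) (f : EucX n → ℝ) : EucX n → ℝ :=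
  fun x => fderiv ℝ f x (EuclideanSpace.single i 1)

/-- The (classical) partial derivative `D^α f` associated with a multi-index `α`. -/
def mderiv (α : Fin (n+1) → ℕ) (f : EucX n → ℝ) : EucX n → ℝ :=
  Fin.foldr (n+1) (fun i g => (pdCoord i)^[α i] g) f

/-- `g` is the weak derivative `D^α f` on the open set `U`. -/
def IsWeakDeriv (U : Set (EucX n)) (α : Fin (n+1) → ℕ) (f g : EucX n → ℝ) : Prop :=
  ∀ ϕ : EucX n → ℝ, ContDiff ℝ (⊤ : ℕ∞) ϕ → HasCompactSupport ϕ → tsupport ϕ ⊆ U →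
    ∫ x in U, f x * mderiv α ϕ x = (-1 : ℝ) ^ (∑ i, α i) * ∫ x in U, g x * ϕ x

/-- `f ∈ W^{l,p}(U)` with the choice `Df α` of its weak derivatives `D^α f`, `|α| ≤ l`. -/
def SobolevFamily (U : Set (EucX n)) (l : ℕ) (p : ℝ) (f : EucX n → ℝ)
    (Df : (Fin (n+1) → ℕ) → EucX n → ℝ) : Prop :=
  Df 0 = f ∧ ∀ α : Fin (n+1) → ℕ, (∑ i, α i) ≤ l →
    MemLp (Df α) (ENNReal.ofReal p) (volume.restrict U) ∧ IsWeakDeriv U α f (Df α)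

/-- `‖f‖_{L^p(U)} = (∫_U |f|^p)^{1/p}`, valued in `ℝ≥0∞`. -/
def lpOn (p : ℝ) (U : Set (EucX n)) (f : EucX n → ℝ) : ℝ≥0∞ :=
  (∫⁻ x in U, ENNReal.ofReal (|f x| ^ p)) ^ (1 / p)

/-- The generalized Morrey norm
`‖f‖_{M^{w,δ}_p(U)} = sup_{x ∈ U} sup_{0<r<δ} (w(r)⁻¹ ∫_{B_r(x) ∩ U} |f|^p)^{1/p}`. -/
def morreyNorm (p : ℝ) (w : ℝ → ℝ) (δ : ℝ≥0∞) (U : Set (EucX n)) (f : EucX n → ℝ) : ℝ≥0∞ :=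
  ⨆ (x : EucX n) (_ : x ∈ U) (r : ℝ) (_ : 0 < r) (_ : ENNReal.ofReal r < δ),
    ((ENNReal.ofReal (w r))⁻¹ * ∫⁻ y in ball x r ∩ U, ENNReal.ofReal (|f y| ^ p)) ^ (1 / p)

/-- The mollified function `f_k(x) = ∫ f(x̄ - 2^{-k} z̄, x_n - A 2^{-k} z_n) ω(z) dz`. -/
def fkfun (A : ℝ) (ω : EucX n → ℝ) (f : EucX n → ℝ) (k : ℤ) (x : EucX n) : ℝ :=
  ∫ z, f (shiftPt A k x z) * ω z

/-- Burenkov's extension operator: `Tf = f` on `Ω`, `Tf = Σ_k ψ_k f_k` outside. -/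
def burT (φ : EucY n → ℝ) (ψ : ℤ → EucX n → ℝ) (A : ℝ) (ω : EucX n → ℝ)
    (f : EucX n → ℝ) : EucX n → ℝ := fun x =>
  if x ∈ OmSet φ then f x else ∑' k : ℤ, ψ k x * fkfun A ω f k x

/-- The hypotheses on the mollification kernel `ω`. -/
def KernelHyp (l : ℕ) (ω : EucX n → ℝ) : Prop :=
  ContDiff ℝ (⊤ : ℕ∞) ω ∧ HasCompactSupport ω ∧
    tsupport ω ⊆ {x : EucX n | x ∈ closedBall 0 1 ∧ 1/2 ≤ lastX x} ∧
    (∫ z, ω z) = 1 ∧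
    ∀ α : Fin (n+1) → ℕ, 0 < ∑ i, α i → (∑ i, α i) ≤ l →
      (∫ z : EucX n, ω z * ∏ i, (z i) ^ (α i)) = 0

/-- The hypotheses on the partition of unity `(ψ_k)_{k ∈ ℤ}` on `G` (Lemma 2.1), with
derivative constants bounded by `Cψ` up to order `l`. -/
def PartitionHyp (l : ℕ) (Cψ : ℝ) (φ : EucY n → ℝ) (ψ : ℤ → EucX n → ℝ) : Prop :=
  (∀ k, ContDiff ℝ (⊤ : ℕ∞) (ψ k)) ∧
  (∀ k x, 0 ≤ ψ k x) ∧
  (∀ x ∈ GSet φ, HasSum (fun k : ℤ => ψ k x) 1) ∧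
  (∀ x ∉ GSet φ, ∀ k, ψ k x = 0) ∧
  (∀ k, GkSet φ k ⊆ Function.support (ψ k) ∧ Function.support (ψ k) ⊆ tGkSet φ k) ∧
  (∀ x : EucX n, {k : ℤ | ψ k x ≠ 0}.encard ≤ 2) ∧
  (∀ α : Fin (n+1) → ℕ, (∑ i, α i) ≤ l → ∀ k x,
    |mderiv α (ψ k) x| ≤ Cψ * (2:ℝ) ^ (k * (∑ i, α i : ℤ)))

namespace St8

/-- the shift vector -/
def vvec (A : ℝ) (k : ℤ) (z : EucX n) : EucX n :=
  WithLp.toLp 2 fun i => if i = Fin.last n then A * (2:ℝ) ^ (-k) * z i else (2:ℝ) ^ (-k) * z i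

lemma shiftPt_eq (A : ℝ) (k : ℤ) (x z : EucX n) : shiftPt A k x z = x - vvec A k z := by
  ext i
  simp only [shiftPt, vvec, PiLp.sub_apply, PiLp.toLp_apply]
  split <;> ring

lemma abs_coord_le {m : ℕ} (x : EuclideanSpace ℝ (Fin m)) (i : Fin m) : |x i| ≤ ‖x‖ := by
  rw [EuclideanSpace.norm_eq, ← Real.sqrt_sq_eq_abs]
  apply Real.sqrt_le_sqrt
  have := Finset.single_le_sum (f := fun j => ‖x j‖^2) (fun j _ => sq_nonneg _) (Finset.mem_univ i)
  simpa [Real.norm_eq_abs, sq_abs] using this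

lemma norm_barX_le (x : EucX n) : ‖barX x‖ ≤ ‖x‖ := by
  rw [EuclideanSpace.norm_eq, EuclideanSpace.norm_eq]
  apply Real.sqrt_le_sqrt
  rw [Fin.sum_univ_castSucc (f := fun i : Fin (n+1) => ‖x i‖^2)]
  exact le_add_of_nonneg_right (sq_nonneg _)

lemma norm_le_of_coord {m : ℕ} (C : ℝ) (hC : 0 ≤ C) (v z : EuclideanSpace ℝ (Fin m))
    (h : ∀ i, |v i| ≤ C * |z i|) : ‖v‖ ≤ C * ‖z‖ := by
  rw [EuclideanSpace.norm_eq, EuclideanSpace.norm_eq, ← Real.sqrt_sq hC,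
    ← Real.sqrt_mul (sq_nonneg C)]
  apply Real.sqrt_le_sqrt
  rw [Finset.mul_sum]
  refine Finset.sum_le_sum fun i _ => ?_
  have h2 : ‖v i‖^2 ≤ (C * |z i|)^2 := by
    rw [Real.norm_eq_abs]
    exact pow_le_pow_left₀ (abs_nonneg _) (h i) 2
  calc ‖v i‖^2 ≤ (C * |z i|)^2 := h2
    _ = C^2 * ‖z i‖^2 := by rw [mul_pow, Real.norm_eq_abs, sq_abs]

lemma norm_vvec_le {A : ℝ} (hA : 0 ≤ A) (k : ℤ) (z : EucX n) :
    ‖vvec A k z‖ ≤ (1+A) * (2:ℝ)^(-k) * ‖z‖ := by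
  have h2 : (0:ℝ) < (2:ℝ)^(-k) := zpow_pos (by norm_num) _
  have hC : 0 ≤ (1+A) * (2:ℝ)^(-k) := by positivity
  refine norm_le_of_coord _ hC _ _ fun i => ?_
  simp only [vvec, PiLp.toLp_apply]
  split
  · rw [abs_mul, abs_mul, abs_of_nonneg hA, abs_of_pos h2]
    have : A * (2:ℝ)^(-k) ≤ (1+A) * (2:ℝ)^(-k) := by nlinarith
    nlinarith [abs_nonneg (z i)]
  · rw [abs_mul, abs_of_pos h2]
    nlinarith [mul_nonneg (mul_nonneg hA h2.le) (abs_nonneg (z i))]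

lemma barX_sub (x y : EucX n) : barX (x - y) = barX x - barX y := by
  ext i
  simp [barX, PiLp.sub_apply]

lemma lastX_sub (x y : EucX n) : lastX (x - y) = lastX x - lastX y := by
  simp [lastX, PiLp.sub_apply]

lemma lastX_vvec (A : ℝ) (k : ℤ) (z : EucX n) : lastX (vvec A k z) = A * (2:ℝ)^(-k) * lastX z := by
  simp [lastX, vvec]

lemma barX_vvec (A : ℝ) (k : ℤ) (z : EucX n) (i : Fin n) :
    barX (vvec A k z) i = (2:ℝ)^(-k) * barX z i := by
  simp only [barX, vvec, PiLp.toLp_apply]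
  rw [if_neg (Fin.castSucc_lt_last i).ne

]

lemma norm_barX_vvec_le {A : ℝ} (hA : 0 ≤ A) (k : ℤ) (z : EucX n) (hz : ‖z‖ ≤ 1) :
    ‖barX (vvec A k z)‖ ≤ (2:ℝ)^(-k) := by
  have h2 : (0:ℝ) < (2:ℝ)^(-k) := zpow_pos (by norm_num) _
  have : ‖barX (vvec A k z)‖ ≤ (2:ℝ)^(-k) * ‖barX z‖ := by
    refine norm_le_of_coord _ h2.le _ _ fun i => ?_
    rw [barX_vvec, abs_mul, abs_of_pos h2]
  refine this.trans ?_
  have := (norm_barX_le z).trans hz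
  nlinarith

section Rho

variable {φ : EucY n → ℝ} {M : ℝ}

lemma rho_diff (hM : 0 ≤ M) (hφ : ∀ x y : EucY n, |φ x - φ y| ≤ M * dist x y) (x y : EucX n) :
    |rhoN φ x - rhoN φ y| ≤ (M+1) * ‖x - y‖ := by
  have h1 : rhoN φ x - rhoN φ y = lastX (x - y) - (φ (barX x) - φ (barX y)) := by
    simp only [rhoN, lastX_sub]; ring
  rw [h1]
  have h2 : |lastX (x-y)| ≤ ‖x - y‖ := abs_coord_le (x - y) (Fin.last n)
  have h3 : |φ (barX x) - φ (barX y)| ≤ M * ‖x - y‖ := by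
    refine (hφ _ _).trans ?_
    have : dist (barX x) (barX y) ≤ ‖x - y‖ := by
      rw [dist_eq_norm, ← barX_sub]; exact norm_barX_le _
    nlinarith
  rw [sub_eq_add_neg]
  calc |lastX (x-y) + -(φ (barX x) - φ (barX y))| ≤ |lastX (x-y)| + |-(φ (barX x) - φ (barX y))| :=
        abs_add_le _ _
    _ = |lastX (x-y)| + |φ (barX x) - φ (barX y)| := by rw [abs_neg]
    _ ≤ (M+1) * ‖x - y‖ := by nlinarith

lemma rho_shift (hφ : ∀ x y : EucY n, |φ x - φ y| ≤ M * dist x y) (hM : 0 ≤ M)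
    {A : ℝ} (hA : 0 ≤ A) (k : ℤ) (x z : EucX n) (hz : ‖z‖ ≤ 1) (hzn : 1/2 ≤ lastX z) :
    rhoN φ (x - vvec A k z) ≤ rhoN φ x - (A/2) * (2:ℝ)^(-k) + M * (2:ℝ)^(-k) ∧
    rhoN φ x - A * (2:ℝ)^(-k) - M * (2:ℝ)^(-k) ≤ rhoN φ (x - vvec A k z) := by
  have h2 : (0:ℝ) < (2:ℝ)^(-k) := zpow_pos (by norm_num) _
  have hzl : |lastX z| ≤ 1 := (abs_coord_le z (Fin.last n)).trans hz
  have hkey : rhoN φ (x - vvec A k z)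
      = rhoN φ x - A * (2:ℝ)^(-k) * lastX z + (φ (barX x) - φ (barX x - barX (vvec A k z))) := by
    simp only [rhoN, lastX_sub, lastX_vvec, barX_sub]; ring
  have hphi : |φ (barX x) - φ (barX x - barX (vvec A k z))| ≤ M * (2:ℝ)^(-k) := by
    refine (hφ _ _).trans ?_
    have hd : dist (barX x) (barX x - barX (vvec A k z)) ≤ (2:ℝ)^(-k) := by
      rw [dist_eq_norm, sub_sub_cancel]
      exact norm_barX_vvec_le hA k z hz
    nlinarith [dist_nonneg (x := barX x) (y := barX x - barX (vvec A k z))]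
  have habs := abs_le.mp hphi
  constructor
  · rw [hkey]
    have : A * (2:ℝ)^(-k) * lastX z ≥ (A/2) * (2:ℝ)^(-k) := by
      nlinarith [mul_nonneg (mul_nonneg hA h2.le) (by linarith : (0:ℝ) ≤ lastX z - 1/2)]
    linarith [habs.2]
  · rw [hkey]
    have : A * (2:ℝ)^(-k) * lastX z ≤ A * (2:ℝ)^(-k) := by
      nlinarith [mul_nonneg (mul_nonneg hA h2.le) (by linarith [abs_le.mp hzl] : (0:ℝ) ≤ 1 - lastX z)]
    linarith [habs.1]

/-- the "band" below the graph where translated points land -/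
def band (φ : EucY n → ℝ) (M : ℝ) (k : ℤ) : Set (EucX n) :=
  {y | (7*M+6) * (2:ℝ)^(-k) ≤ -(rhoN φ y) ∧ -(rhoN φ y) ≤ (17*M+16) * (2:ℝ)^(-k)}

lemma band_subset_Om (hM : 0 ≤ M) (k : ℤ) : band φ M k ⊆ OmSet φ := by
  intro y hy
  have h2 : (0:ℝ) < (2:ℝ)^(-k) := zpow_pos (by norm_num) _
  have : 0 < -(rhoN φ y) := lt_of_lt_of_le (by positivity) hy.1
  simp only [OmSet, mem_setOf_eq]
  simp only [rhoN] at this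
  linarith

lemma measurableSet_band (hφc : Continuous φ) (k : ℤ) : MeasurableSet (band φ M k) := by
  have hrho : Continuous (rhoN φ) := by
    apply Continuous.sub
    · exact (continuous_apply (Fin.last n)).comp (PiLp.continuous_ofLp 2 _)
    · refine hφc.comp ?_
      refine Continuous.comp (PiLp.continuous_toLp 2 _) ?_
      exact continuous_pi fun i => (continuous_apply i.castSucc).comp (PiLp.continuous_ofLp 2 _)
  exact ((isClosed_le continuous_const hrho.neg).inter
    (isClosed_le hrho.neg continuous_const)).measurableSet

lemma continuous_rho (hφc : Continuous φ) : Continuous (rhoN φ) := by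
  apply Continuous.sub
  · exact (continuous_apply (Fin.last n)).comp (PiLp.continuous_ofLp 2 _)
  · refine hφc.comp ?_
    refine Continuous.comp (PiLp.continuous_toLp 2 _) ?_
    exact continuous_pi fun i => (continuous_apply i.castSucc).comp (PiLp.continuous_ofLp 2 _)

/-- a point lies in at most 3 bands -/
lemma band_overlap (hM : 0 ≤ M) (y : EucX n) :
    (∑' k : ℤ, (band φ M k).indicator (fun _ => (1:ℝ≥0∞)) y) ≤ 3 := by
  by_cases hne : ∃ k₀ : ℤ, y ∈ band φ M k₀
  · obtain ⟨k₀, hk₀⟩ := hne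
    have hsub : ∀ k : ℤ, y ∈ band φ M k → k ∈ Finset.Icc (k₀-1) (k₀+1) := by
      intro k hk
      have key : ∀ a b : ℤ, y ∈ band φ M a → y ∈ band φ M b → a - b ≤ 1 := by
        intro a b ha hb
        by_contra hcon
        push_neg at hcon
        have h2 : (0:ℝ) < (2:ℝ)^(-a) := zpow_pos (by norm_num) _
        have h2' : (0:ℝ) < (2:ℝ)^(-b) := zpow_pos (by norm_num) _
        have h1 : (7*M+6) * (2:ℝ)^(-b) ≤ (17*M+16) * (2:ℝ)^(-a) := le_trans hb.1 ha.2
        have h4 : (2:ℝ)^(-b) ≤ 3 * (2:ℝ)^(-a) := by nlinarith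
        have h5 : (2:ℝ)^(a - b) ≤ 3 := by
          have := mul_le_mul_of_nonneg_right h4 (le_of_lt (zpow_pos (by norm_num : (0:ℝ) < 2) a))
          rw [← zpow_add₀ (by norm_num : (2:ℝ) ≠ 0)] at this
          calc (2:ℝ)^(a-b) = (2:ℝ)^(-b+a) := by ring_nf
            _ ≤ 3 * ((2:ℝ)^(-a) * (2:ℝ)^a) := by linarith [this]
            _ = 3 := by rw [← zpow_add₀ (by norm_num : (2:ℝ) ≠ 0)]; simp
        have h6 : (2:ℝ)^((2:ℤ)) ≤ (2:ℝ)^(a-b) := by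
          apply zpow_le_zpow_right₀ (by norm_num) (by omega)
        norm_num at h6
        linarith
      have h1 := key k₀ k hk₀ hk
      have h2' := key k k₀ hk hk₀
      simp only [Finset.mem_Icc]
      omega
    calc (∑' k : ℤ, (band φ M k).indicator (fun _ => (1:ℝ≥0∞)) y)
        = ∑ k ∈ Finset.Icc (k₀-1) (k₀+1), (band φ M k).indicator (fun _ => (1:ℝ≥0∞)) y := by
          refine tsum_eq_sum fun k hk => ?_
          rw [indicator_of_notMem]
          intro hmem
          exact hk (hsub k hmem)
      _ ≤ ∑ k ∈ Finset.Icc (k₀-1) (k₀+1), 1 := by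
          refine Finset.sum_le_sum fun k _ => ?_
          by_cases h : y ∈ band φ M k <;> simp [h]
      _ ≤ 3 := by
          rw [Finset.sum_const, Int.card_Icc]
          have h3 : (k₀+1+1-(k₀-1) : ℤ) = 3 := by ring
          rw [h3]
          simp [nsmul_eq_mul]
  · push_neg at hne
    have : ∀ k : ℤ, (band φ M k).indicator (fun _ => (1:ℝ≥0∞)) y = 0 := fun k =>
      indicator_of_notMem (hne k) _
    simp [this]

end Rho

section Cover

/-- uniform finite covering of `K`-dilated balls by quarter-radius balls -/
lemma cover_exists (K : ℝ) (hK : 0 < K) :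
    ∃ T : Finset (EucX n), ∀ (x₀ : EucX n) (r : ℝ), 0 < r →
      ball x₀ (K*r) ⊆ ⋃ c ∈ T, ball (x₀ + r • (c : EucX n)) (r/4) := by
  obtain ⟨T, hT⟩ := (isCompact_closedBall (0 : EucX n) K).elim_finite_subcover
    (fun c : EucX n => ball c 8⁻¹) (fun c => isOpen_ball)
    (fun u hu => mem_iUnion.mpr ⟨u, mem_ball_self (by norm_num)⟩)
  refine ⟨T, fun x₀ r hr y hy => ?_⟩
  have hu : r⁻¹ • (y - x₀) ∈ closedBall (0 : EucX n) K := by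
    simp only [mem_closedBall, dist_zero_right, norm_smul, norm_inv, Real.norm_eq_abs,
      abs_of_pos hr]
    rw [mem_ball, dist_eq_norm] at hy
    rw [inv_mul_le_iff₀ hr]
    linarith [hy]
  obtain ⟨c, hcT, hc⟩ := by
    have := hT hu
    simpa only [mem_iUnion, exists_prop] using this
  refine mem_biUnion hcT ?_
  rw [mem_ball, dist_eq_norm] at hc ⊢
  have : y - (x₀ + r • c) = r • (r⁻¹ • (y - x₀) - c) := by
    rw [smul_sub, smul_smul, mul_inv_cancel₀ hr.ne', one_smul]
    abel
  rw [this, norm_smul, Real.norm_eq_abs, abs_of_pos hr]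
  calc r * ‖r⁻¹ • (y - x₀) - c‖ < r * 8⁻¹ := by
        exact mul_lt_mul_of_pos_left hc hr
    _ ≤ r/4 := by linarith

end Cover

section MorreyTools

variable {p : ℝ} {w : ℝ → ℝ} {δ : ℝ≥0∞} {φ : EucY n → ℝ}

/-- extraction of the basic ball estimate from the Morrey norm -/
lemma morrey_ball (hp : 1 ≤ p) (hw : ∀ r : ℝ, 0 < r → 0 < w r)
    (f : EucX n → ℝ) {y : EucX n} (hy : y ∈ OmSet φ) {r : ℝ} (hr : 0 < r)
    (hrδ : ENNReal.ofReal r < δ) :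
    ∫⁻ u in ball y r ∩ OmSet φ, ENNReal.ofReal (|f u| ^ p) ≤
      ENNReal.ofReal (w r) * (morreyNorm p w δ (OmSet φ) f) ^ p := by
  have hp0 : (0:ℝ) < p := lt_of_lt_of_le one_pos hp
  have hwr : (0:ℝ) < w r := hw r hr
  have hwne : ENNReal.ofReal (w r) ≠ 0 := by
    simp [ENNReal.ofReal_eq_zero]; linarith
  have hwtop : ENNReal.ofReal (w r) ≠ ⊤ := ENNReal.ofReal_ne_top
  set I := ∫⁻ u in ball y r ∩ OmSet φ, ENNReal.ofReal (|f u| ^ p) with hI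
  have h1 : ((ENNReal.ofReal (w r))⁻¹ * I) ^ (1/p) ≤ morreyNorm p w δ (OmSet φ) f := by
    rw [morreyNorm]
    exact le_iSup_of_le y (le_iSup_of_le hy (le_iSup_of_le r (le_iSup_of_le hr
      (le_iSup_of_le hrδ le_rfl))))
  have h2 : (ENNReal.ofReal (w r))⁻¹ * I ≤ (morreyNorm p w δ (OmSet φ) f) ^ p := by
    have := ENNReal.rpow_le_rpow h1 hp0.le
    rwa [← ENNReal.rpow_mul, one_div, inv_mul_cancel₀ hp0.ne', ENNReal.rpow_one] at this
  calc I = ENNReal.ofReal (w r) * ((ENNReal.ofReal (w r))⁻¹ * I) := by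
        rw [← mul_assoc, ENNReal.mul_inv_cancel hwne hwtop, one_mul]
    _ ≤ ENNReal.ofReal (w r) * (morreyNorm p w δ (OmSet φ) f) ^ p :=
        mul_le_mul_right h2 _

/-- covering bound: integral over a `K r` ball is controlled by `card T` many `r`-balls -/
lemma cover_bound (hp : 1 ≤ p) (hw : ∀ r : ℝ, 0 < r → 0 < w r)
    {K : ℝ} (hK : 0 < K) {T : Finset (EucX n)}
    (hT : ∀ (x₀ : EucX n) (r : ℝ), 0 < r →
      ball x₀ (K*r) ⊆ ⋃ c ∈ T, ball (x₀ + r • (c : EucX n)) (r/4))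
    (f : EucX n → ℝ) (x₁ : EucX n) {r : ℝ} (hr : 0 < r) (hrδ : ENNReal.ofReal r < δ) :
    ∫⁻ u in ball x₁ (K*r) ∩ OmSet φ, ENNReal.ofReal (|f u| ^ p) ≤
      (T.card : ℝ≥0∞) * (ENNReal.ofReal (w r) * (morreyNorm p w δ (OmSet φ) f) ^ p) := by
  classical
  set Q := ENNReal.ofReal (w r) * (morreyNorm p w δ (OmSet φ) f) ^ p with hQ
  -- for each c choose a center in Ω if possible
  have key : ∀ c : EucX n, ∫⁻ u in ball (x₁ + r • c) (r/4) ∩ OmSet φ,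
      ENNReal.ofReal (|f u| ^ p) ≤ Q := by
    intro c
    by_cases hne : (ball (x₁ + r • c) (r/4) ∩ OmSet φ).Nonempty
    · obtain ⟨yc, hyc⟩ := hne
      have hsub : ball (x₁ + r • c) (r/4) ∩ OmSet φ ⊆ ball yc r ∩ OmSet φ := by
        intro u hu
        refine ⟨?_, hu.2⟩
        rw [mem_ball] at *
        have h1 := hu.1
        have h2 := hyc.1
        rw [mem_ball] at h2
        calc dist u yc ≤ dist u (x₁ + r • c) + dist (x₁ + r • c) yc := dist_triangle _ _ _
          _ < r/4 + r/4 := by rw [dist_comm (x₁ + r • c) yc]; exact add_lt_add h1 h2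
          _ ≤ r := by linarith
      calc ∫⁻ u in ball (x₁ + r • c) (r/4) ∩ OmSet φ, ENNReal.ofReal (|f u| ^ p)
          ≤ ∫⁻ u in ball yc r ∩ OmSet φ, ENNReal.ofReal (|f u| ^ p) :=
            lintegral_mono_set hsub
        _ ≤ Q := morrey_ball hp hw f hyc.2 hr hrδ
    · rw [not_nonempty_iff_eq_empty] at hne
      rw [hne]
      simp
  have hsub2 : ball x₁ (K*r) ∩ OmSet φ ⊆ ⋃ c ∈ T, (ball (x₁ + r • c) (r/4) ∩ OmSet φ) := by
    intro u hu
    obtain ⟨s, hs, hu'⟩ := by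
      have := hT x₁ r hr hu.1
      simpa only [mem_iUnion, exists_prop] using this
    exact mem_biUnion hs ⟨hu', hu.2⟩
  calc ∫⁻ u in ball x₁ (K*r) ∩ OmSet φ, ENNReal.ofReal (|f u| ^ p)
      ≤ ∫⁻ u in ⋃ c ∈ T, (ball (x₁ + r • c) (r/4) ∩ OmSet φ), ENNReal.ofReal (|f u| ^ p) :=
        lintegral_mono_set hsub2
    _ ≤ ∑' c : T, ∫⁻ u in ball (x₁ + r • (c:EucX n)) (r/4) ∩ OmSet φ,
          ENNReal.ofReal (|f u| ^ p) := by
        rw [show (⋃ c ∈ T, (ball (x₁ + r • c) (r/4) ∩ OmSet φ)) =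
          ⋃ c : T, (ball (x₁ + r • (c:EucX n)) (r/4) ∩ OmSet φ) from by
            ext u; simp; tauto]
        exact lintegral_iUnion_le _ _
    _ ≤ ∑' c : T, Q := ENNReal.tsum_le_tsum fun c => key c
    _ = (T.card : ℝ≥0∞) * Q := by
        rw [tsum_fintype]
        simp [Finset.sum_const, nsmul_eq_mul, Finset.card_univ]

end MorreyTools

section Tools

/-- Jensen / Hoelder inequality for `lintegral` -/
lemma jensen {α : Type*} [MeasurableSpace α] (ν : Measure α) {p : ℝ} (hp : 1 ≤ p)
    {h : α → ℝ≥0∞} (hh : AEMeasurable h ν) :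
    (∫⁻ a, h a ∂ν) ^ p ≤ (ν Set.univ) ^ (p-1) * ∫⁻ a, (h a) ^ p ∂ν := by
  rcases eq_or_lt_of_le hp with heq | hlt
  · subst heq
    simp
  · have hp0 : (0:ℝ) < p := lt_trans one_pos hlt
    have hpq : p.HolderConjugate (p/(p-1)) := Real.HolderConjugate.conjExponent hlt
    have hH := ENNReal.lintegral_mul_le_Lp_mul_Lq ν hpq hh (aemeasurable_const (b := (1:ℝ≥0∞)))
    simp only [Pi.mul_apply, mul_one, ENNReal.one_rpow, lintegral_const, one_mul] at hH
    have h2 := ENNReal.rpow_le_rpow hH hp0.le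
    rw [ENNReal.mul_rpow_of_nonneg _ _ hp0.le, ← ENNReal.rpow_mul, ← ENNReal.rpow_mul,
      one_div, inv_mul_cancel₀ hp0.ne', ENNReal.rpow_one] at h2
    have hexp : (1 / (p / (p - 1)) * p) = p - 1 := by
      rw [one_div, inv_div]
      field_simp
    rw [hexp] at h2
    exact h2.trans (le_of_eq (mul_comm _ _))

lemma ofReal_abs_rpow {p : ℝ} (hp0 : 0 ≤ p) (t : ℝ) :
    ((‖t‖₊ : ℝ≥0∞))^p = ENNReal.ofReal (|t| ^ p) := by
  rw [← ENNReal.ofReal_rpow_of_nonneg (abs_nonneg t) hp0]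
  congr 1
  rw [← Real.norm_eq_abs, ofReal_norm, enorm_eq_nnnorm]

/-- translation identity for set lintegrals -/
lemma lintegral_shift {E : Set (EucX n)} (hE : MeasurableSet E) (g : EucX n → ℝ≥0∞)
    (v : EucX n) :
    ∫⁻ y in E, g (y - v) = ∫⁻ u in (fun u => u + v) ⁻¹' E, g u := by
  have hE' : MeasurableSet ((fun u => u + v) ⁻¹' E) := hE.preimage (measurable_add_const v)
  rw [← lintegral_indicator hE, ← lintegral_indicator hE']
  have hfun : ∀ y : EucX n, E.indicator (fun y' => g (y' - v)) y
      = ((fun u => u + v) ⁻¹' E).indicator g (-v + y) := by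
    intro y
    by_cases hy : y ∈ E
    · rw [indicator_of_mem hy, indicator_of_mem]
      · congr 1
        abel
      · simp only [mem_preimage]
        convert hy using 2
        abel
    · rw [indicator_of_notMem hy, indicator_of_notMem]
      simp only [mem_preimage]
      intro hcon
      apply hy
      convert hcon using 2
      abel
  calc ∫⁻ y, E.indicator (fun y' => g (y' - v)) y
      = ∫⁻ y, ((fun u => u + v) ⁻¹' E).indicator g (-v + y) := by
        congr 1
        funext y
        exact hfun y
    _ = ∫⁻ u, ((fun u => u + v) ⁻¹' E).indicator g u :=
        lintegral_add_left_eq_self _ (-v)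

/-- diagonal linear equivalence -/
def diagEquiv (c : Fin (n+1) → ℝ) (hc : ∀ i, c i ≠ 0) : EucX n ≃ₗ[ℝ] EucX n where
  toFun z := WithLp.toLp 2 fun i => c i * z i
  invFun z := WithLp.toLp 2 fun i => (c i)⁻¹ * z i
  map_add' a b := by
    ext i
    simp only [PiLp.add_apply, PiLp.toLp_apply]
    ring
  map_smul' r a := by
    ext i
    simp only [PiLp.smul_apply, RingHom.id_apply, smul_eq_mul, PiLp.toLp_apply]
    ring
  left_inv z := by
    ext i
    simp only [PiLp.toLp_apply]
    rw [← mul_assoc, inv_mul_cancel₀ (hc i), one_mul]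
  right_inv z := by
    ext i
    simp only [PiLp.toLp_apply]
    rw [← mul_assoc, mul_inv_cancel₀ (hc i), one_mul]

lemma null_preimage_diag (c : Fin (n+1) → ℝ) (hc : ∀ i, c i ≠ 0) {N : Set (EucX n)}
    (hN : volume N = 0) (x : EucX n) :
    volume ((fun z : EucX n => x - diagEquiv c hc z) ⁻¹' N) = 0 := by
  have h1 : (fun z : EucX n => x - diagEquiv c hc z) ⁻¹' N
      = (diagEquiv c hc).toLinearMap ⁻¹' ((fun u : EucX n => x - u) ⁻¹' N) := rfl
  rw [h1]
  have hdet : LinearMap.det ((diagEquiv c hc).toLinearMap) ≠ 0 :=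
    ((diagEquiv c hc).isUnit_det').ne_zero
  rw [Measure.addHaar_preimage_linearMap volume hdet]
  have h2 : ((fun u : EucX n => x - u) ⁻¹' N) = Neg.neg ⁻¹' ((fun u : EucX n => x + u) ⁻¹' N) := by
    ext u
    simp [sub_eq_add_neg]
  rw [h2, Measure.measure_preimage_neg, measure_preimage_add, hN, mul_zero]

/-- sum of an indicator over a set contained in a finite set -/
lemma tsum_ind_le_card {S : Set ℤ} [DecidablePred (· ∈ S)] (t : Finset ℤ) (hS : S ⊆ ↑t) :
    (∑' k : ℤ, (if k ∈ S then (1:ℝ≥0∞) else 0)) ≤ t.card := by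
  classical
  calc (∑' k : ℤ, (if k ∈ S then (1:ℝ≥0∞) else 0))
      = ∑ k ∈ t, (if k ∈ S then (1:ℝ≥0∞) else 0) := by
        refine tsum_eq_sum fun k hk => ?_
        rw [if_neg]
        intro hmem
        exact hk (hS hmem)
    _ ≤ ∑ k ∈ t, 1 := Finset.sum_le_sum fun k _ => by split <;> simp
    _ = t.card := by simp

/-- power mean inequality for a sum of at most two terms -/
lemma twoSumPow {p : ℝ} (hp : 1 ≤ p) (s : Finset ℤ) (hs : s.card ≤ 2) (a : ℤ → ℝ≥0∞) :
    (∑ k ∈ s, a k) ^ p ≤ 2 ^ (p-1) * ∑ k ∈ s, (a k) ^ p := by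
  classical
  have hp0 : (0:ℝ) < p := lt_of_lt_of_le one_pos hp
  have h2p : (1:ℝ≥0∞) ≤ 2 ^ (p-1) := by
    calc (1:ℝ≥0∞) = 2 ^ (0:ℝ) := by simp
      _ ≤ 2 ^ (p-1) := ENNReal.rpow_le_rpow_of_exponent_le (by norm_num) (by linarith)
  interval_cases h : s.card
  · rw [Finset.card_eq_zero] at h
    subst h
    simp [ENNReal.zero_rpow_of_pos hp0]
  · rw [Finset.card_eq_one] at h
    obtain ⟨x, rfl⟩ := h
    simp only [Finset.sum_singleton]
    calc (a x) ^ p = 1 * (a x) ^ p := (one_mul _).symm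
      _ ≤ 2 ^ (p-1) * (a x) ^ p := mul_le_mul_left h2p _
  · rw [Finset.card_eq_two] at h
    obtain ⟨x, y, hxy, rfl⟩ := h
    rw [Finset.sum_pair hxy, Finset.sum_pair hxy]
    have hmean := ENNReal.rpow_arith_mean_le_arith_mean2_rpow (1/2) (1/2) (a x) (a y)
      (by rw [one_div, ← two_mul, ENNReal.mul_inv_cancel] <;> norm_num) hp
    have hkey : a x + a y = 2 * ((1/2) * a x + (1/2) * a y) := by
      rw [mul_add, ← mul_assoc, ← mul_assoc]
      rw [show (2:ℝ≥0∞) * (1/2) = 1 from by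
        rw [one_div]; rw [ENNReal.mul_inv_cancel] <;> norm_num]
      rw [one_mul, one_mul]
    rw [hkey, ENNReal.mul_rpow_of_nonneg _ _ hp0.le]
    calc (2:ℝ≥0∞)^p * ((1/2) * a x + (1/2) * a y) ^ p
        ≤ 2^p * ((1/2) * (a x)^p + (1/2) * (a y)^p) := mul_le_mul_right hmean _
      _ = 2^(p-1) * ((a x)^p + (a y)^p) := by
          rw [mul_add, mul_add, ← mul_assoc, ← mul_assoc]
          congr 2 <;>
          · rw [show (p:ℝ) - 1 = p + (-1) from by ring, ENNReal.rpow_add _ _ (by norm_num) (by norm_num)]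
            congr 1
            rw [ENNReal.rpow_neg_one, one_div]

end Tools

section Shift

variable {φ : EucY n → ℝ} {M : ℝ}

lemma zpow_sub2 (k : ℤ) : (2:ℝ)^(-k-2) = (2:ℝ)^(-k) / 4 := by
  rw [zpow_sub₀ (by norm_num : (2:ℝ) ≠ 0)]
  norm_num

lemma zpow_add1 (k : ℤ) : (2:ℝ)^(-k+1) = 2 * (2:ℝ)^(-k) := by
  rw [zpow_add₀ (by norm_num : (2:ℝ) ≠ 0)]
  ring

lemma shift_mem_band (hM : 0 ≤ M) (hφ : ∀ x y : EucY n, |φ x - φ y| ≤ M * dist x y)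
    (k : ℤ) {y z : EucX n} (hy : y ∈ tGkSet φ k) (hz : ‖z‖ ≤ 1) (hzn : 1/2 ≤ lastX z) :
    y - vvec (16*(M+1)) k z ∈ band φ M k := by
  have hA : (0:ℝ) ≤ 16*(M+1) := by linarith
  have h2 : (0:ℝ) < (2:ℝ)^(-k) := zpow_pos (by norm_num) _
  obtain ⟨hub, hlb⟩ := rho_shift hφ hM hA k y z hz hzn
  have hy1 : (2:ℝ)^(-k)/4 < rhoN φ y := by rw [← zpow_sub2]; exact hy.2.1
  have hy2 : rhoN φ y ≤ 2 * (2:ℝ)^(-k) := by rw [← zpow_add1]; exact hy.2.2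
  have hub' : rhoN φ (y - vvec (16*(M+1)) k z) ≤ -((7*M+6) * (2:ℝ)^(-k)) := by nlinarith
  have hlb' : -((17*M+16) * (2:ℝ)^(-k)) ≤ rhoN φ (y - vvec (16*(M+1)) k z) := by nlinarith
  exact ⟨by linarith, by linarith⟩

lemma shift_mem_Om (hM : 0 ≤ M) (hφ : ∀ x y : EucY n, |φ x - φ y| ≤ M * dist x y)
    (k : ℤ) {y z : EucX n} (hy : y ∈ tGkSet φ k) (hz : ‖z‖ ≤ 1) (hzn : 1/2 ≤ lastX z) :
    y - vvec (16*(M+1)) k z ∈ OmSet φ :=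
  band_subset_Om hM k (shift_mem_band hM hφ k hy hz hzn)

lemma caseB_sep (hM : 0 ≤ M) (hφ : ∀ x y : EucY n, |φ x - φ y| ≤ M * dist x y)
    {x₀ : EucX n} {r : ℝ} (hr : 0 < r) {k k' : ℤ} (hk' : r < (2:ℝ)^(-k'))
    {y y' : EucX n} (hy : y ∈ tGkSet φ k) (hyb : y ∈ ball x₀ r)
    (hy' : y' ∈ tGkSet φ k') (hyb' : y' ∈ ball x₀ r)
    {D : ℕ} (hD : 8*M+16 < 2^D) : k' - k ≤ (D:ℤ) := by
  have h2k : (0:ℝ) < (2:ℝ)^(-k) := zpow_pos (by norm_num) _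
  have h2k' : (0:ℝ) < (2:ℝ)^(-k') := zpow_pos (by norm_num) _
  have hdist : ‖y - y'‖ < 2*r := by
    rw [mem_ball, dist_eq_norm] at hyb hyb'
    calc ‖y - y'‖ ≤ ‖y - x₀‖ + ‖x₀ - y'‖ := by
          rw [show y - y' = (y - x₀) + (x₀ - y') from by abel]; exact norm_add_le _ _
      _ < 2*r := by rw [norm_sub_rev x₀ y']; linarith
  have hrho := (abs_le.mp (rho_diff hM hφ y y')).2
  have hy1 : (2:ℝ)^(-k)/4 < rhoN φ y := by rw [← zpow_sub2]; exact hy.2.1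
  have hy2 : rhoN φ y' ≤ 2 * (2:ℝ)^(-k') := by rw [← zpow_add1]; exact hy'.2.2
  -- 2^{-k}/4 < ρ y ≤ ρ y' + (M+1) 2 r < 2·2^{-k'} + 2(M+1) 2^{-k'}
  have hM1 : (0:ℝ) < M + 1 := by linarith
  have key : (2:ℝ)^(-k)/4 < (2*M+4) * (2:ℝ)^(-k') := by
    have h3 : rhoN φ y ≤ rhoN φ y' + (M+1) * ‖y - y'‖ := by linarith
    have h4 : (M+1) * ‖y - y'‖ ≤ (M+1) * (2*r) := by nlinarith [norm_nonneg (y - y')]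
    nlinarith
  have key2 : (2:ℝ)^(k' - k) < 8*M+16 := by
    have hmul := mul_lt_mul_of_pos_right key (zpow_pos (by norm_num : (0:ℝ) < 2) k')
    rw [div_mul_eq_mul_div, ← zpow_add₀ (by norm_num : (2:ℝ) ≠ 0)] at hmul
    have he : -k + k' = k' - k := by ring
    rw [he] at hmul
    have hc : (2*M+4) * (2:ℝ)^(-k') * (2:ℝ)^(k') = 2*M+4 := by
      rw [mul_assoc, ← zpow_add₀ (by norm_num : (2:ℝ) ≠ 0)]
      simp
    rw [hc] at hmul
    linarith
  have key3 : (2:ℝ)^(k'-k) < (2:ℝ)^((D:ℤ)) := by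
    rw [zpow_natCast]
    linarith
  have := (zpow_lt_zpow_iff_right₀ (by norm_num : (1:ℝ) < 2)).mp key3
  omega

lemma null_preimage_shift {A : ℝ} (hA : 0 < A) (k : ℤ) (x : EucX n) {N : Set (EucX n)}
    (hN : volume N = 0) : volume ((fun z : EucX n => x - vvec A k z) ⁻¹' N) = 0 := by
  have h2 : (0:ℝ) < (2:ℝ)^(-k) := zpow_pos (by norm_num) _
  set c : Fin (n+1) → ℝ := fun i => if i = Fin.last n then A * (2:ℝ)^(-k) else (2:ℝ)^(-k) with hcdef
  have hc : ∀ i, c i ≠ 0 := by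
    intro i
    simp only [hcdef]
    split
    · positivity
    · positivity
  have heq : (fun z : EucX n => x - vvec A k z) = (fun z : EucX n => x - diagEquiv c hc z) := by
    funext z
    congr 1
    ext i
    show vvec A k z i = c i * z i
    simp only [vvec, hcdef, PiLp.toLp_apply]
    split <;> ring
  rw [heq]
  exact null_preimage_diag c hc hN x

end Shift

section Fk

variable {φ : EucY n → ℝ} {M : ℝ} {ω : EucX n → ℝ}

lemma mem_supp_props (hωsupp : tsupport ω ⊆ {x : EucX n | x ∈ closedBall 0 1 ∧ 1/2 ≤ lastX x})
    {z : EucX n} (hz : ω z ≠ 0) : ‖z‖ ≤ 1 ∧ 1/2 ≤ lastX z := by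
  have := hωsupp (subset_closure (by simpa [Function.mem_support] using hz))
  obtain ⟨h1, h2⟩ := this
  rw [mem_closedBall, dist_zero_right] at h1
  exact ⟨h1, h2⟩

lemma fk_congr (hM : 0 ≤ M) (hφ : ∀ x y : EucY n, |φ x - φ y| ≤ M * dist x y)
    (hωsupp : tsupport ω ⊆ {x : EucX n | x ∈ closedBall 0 1 ∧ 1/2 ≤ lastX x})
    {f f₀ : EucX n → ℝ} {Nb : Set (EucX n)} (hNb0 : volume Nb = 0)
    (hff₀ : ∀ x, x ∈ OmSet φ → x ∉ Nb → f x = f₀ x)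
    (k : ℤ) {y : EucX n} (hy : y ∈ tGkSet φ k) :
    fkfun (16*(M+1)) ω f k y = fkfun (16*(M+1)) ω f₀ k y := by
  have hA : (0:ℝ) < 16*(M+1) := by linarith
  unfold fkfun
  apply integral_congr_ae
  have hpre : volume ((fun z : EucX n => y - vvec (16*(M+1)) k z) ⁻¹' Nb) = 0 :=
    null_preimage_shift hA k y hNb0
  filter_upwards [measure_eq_zero_iff_ae_notMem.mp hpre] with z hz
  by_cases hωz : ω z = 0
  · simp [hωz]
  · obtain ⟨hz1, hz2⟩ := mem_supp_props hωsupp hωz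
    have hsh : shiftPt (16*(M+1)) k y z = y - vvec (16*(M+1)) k z := shiftPt_eq _ _ _ _
    show f (shiftPt (16*(M+1)) k y z) * ω z = f₀ (shiftPt (16*(M+1)) k y z) * ω z
    rw [hsh]
    congr 1
    exact hff₀ _ (shift_mem_Om hM hφ k hy hz1 hz2) hz

lemma vvec_continuous {A : ℝ} (hA : A ≠ 0) (k : ℤ) :
    Continuous (fun z : EucX n => vvec A k z) := by
  have h2 : (0:ℝ) < (2:ℝ)^(-k) := zpow_pos (by norm_num) _
  set c : Fin (n+1) → ℝ := fun i => if i = Fin.last n then A * (2:ℝ)^(-k) else (2:ℝ)^(-k) with hcdef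
  have hc : ∀ i, c i ≠ 0 := by
    intro i
    simp only [hcdef]
    split
    · exact mul_ne_zero hA h2.ne'
    · exact h2.ne'
  have heq : (fun z : EucX n => vvec A k z) = fun z : EucX n => diagEquiv c hc z := by
    funext z
    ext i
    show vvec A k z i = c i * z i
    simp only [vvec, hcdef, PiLp.toLp_apply]
    split <;> ring
  rw [heq]
  exact LinearMap.continuous_of_finiteDimensional (diagEquiv c hc).toLinearMap

/-- Jensen bound for the mollified function -/
lemma fk_bound {p : ℝ} (hp : 1 ≤ p) (hωc : Continuous ω)
    {f₀ : EucX n → ℝ} (hf₀ : Measurable f₀) {A : ℝ} (hA : A ≠ 0) (k : ℤ) (y : EucX n) :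
    ((‖fkfun A ω f₀ k y‖₊ : ℝ≥0∞)) ^ p ≤ (∫⁻ z, (‖ω z‖₊ : ℝ≥0∞)) ^ (p-1) *
      ∫⁻ z, ((‖f₀ (y - vvec A k z)‖₊ : ℝ≥0∞)) ^ p * (‖ω z‖₊ : ℝ≥0∞) := by
  have hp0 : (0:ℝ) < p := lt_of_lt_of_le one_pos hp
  set ν : Measure (EucX n) := volume.withDensity (fun z => (‖ω z‖₊ : ℝ≥0∞)) with hν
  have hωm : Measurable fun z : EucX n => (‖ω z‖₊ : ℝ≥0∞) := hωc.measurable.nnnorm.coe_nnreal_ennreal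
  have hfm : Measurable fun z : EucX n => f₀ (y - vvec A k z) :=
    hf₀.comp (continuous_const.sub (vvec_continuous hA k)).measurable
  have hhm : Measurable fun z : EucX n => ((‖f₀ (y - vvec A k z)‖₊ : ℝ≥0∞)) :=
    hfm.nnnorm.coe_nnreal_ennreal
  have hνuniv : ν Set.univ = ∫⁻ z, (‖ω z‖₊ : ℝ≥0∞) := by
    rw [hν, withDensity_apply _ MeasurableSet.univ, setLIntegral_univ]
  have h1 : ((‖fkfun A ω f₀ k y‖₊ : ℝ≥0∞)) ≤ ∫⁻ z, ((‖f₀ (y - vvec A k z)‖₊ : ℝ≥0∞)) ∂ν := by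
    calc ((‖fkfun A ω f₀ k y‖₊ : ℝ≥0∞))
        ≤ ∫⁻ z, (‖f₀ (shiftPt A k y z) * ω z‖₊ : ℝ≥0∞) :=
          enorm_integral_le_lintegral_enorm _
      _ = ∫⁻ z, (‖ω z‖₊ : ℝ≥0∞) * ((‖f₀ (y - vvec A k z)‖₊ : ℝ≥0∞)) := by
          congr 1
          funext z
          rw [shiftPt_eq, nnnorm_mul]
          push_cast
          ring
      _ = ∫⁻ z, ((‖f₀ (y - vvec A k z)‖₊ : ℝ≥0∞)) ∂ν := by
          rw [hν, lintegral_withDensity_eq_lintegral_mul _ hωm hhm]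
          rfl
  calc ((‖fkfun A ω f₀ k y‖₊ : ℝ≥0∞)) ^ p
      ≤ (∫⁻ z, ((‖f₀ (y - vvec A k z)‖₊ : ℝ≥0∞)) ∂ν) ^ p := ENNReal.rpow_le_rpow h1 hp0.le
    _ ≤ (ν Set.univ) ^ (p-1) * ∫⁻ z, ((‖f₀ (y - vvec A k z)‖₊ : ℝ≥0∞)) ^ p ∂ν :=
        jensen ν hp hhm.aemeasurable
    _ = (∫⁻ z, (‖ω z‖₊ : ℝ≥0∞)) ^ (p-1) *
        ∫⁻ z, ((‖f₀ (y - vvec A k z)‖₊ : ℝ≥0∞)) ^ p * (‖ω z‖₊ : ℝ≥0∞) := by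
        rw [hνuniv, hν, lintegral_withDensity_eq_lintegral_mul _ hωm (hhm.pow_const p)]
        congr 1
        apply lintegral_congr
        intro z
        simp [mul_comm]

end Fk

end St8

set_option maxHeartbeats 2000000 in
/-- Corollary 2.6 (i): there exists `c > 0` (depending only on `n, l, p, M, ω`
and the partition constant, in particular independent of `δ` and `w`) such that
`‖Tf‖_{M^{w,δ}_p(ℝⁿ)} ≤ c ‖f‖_{M^{w,δ}_p(Ω)}` for all `δ ∈ (0,∞]` and all `f ∈ W^{l,p}(Ω)`. -/
theorem statement8 (n : ℕ) (hn : 1 ≤ n) (M : ℝ) (hM : 0 ≤ M) (Cψ : ℝ)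
    (l : ℕ) (p : ℝ) (hp : 1 ≤ p) (ω : EucX n → ℝ) (hω : KernelHyp l ω) :
    ∃ c : ℝ, 0 < c ∧
      ∀ (φ : EucY n → ℝ), (∀ x y : EucY n, |φ x - φ y| ≤ M * dist x y) →
      ∀ ψ : ℤ → EucX n → ℝ, PartitionHyp l Cψ φ ψ →
      ∀ w : ℝ → ℝ, (∀ r : ℝ, 0 < r → 0 < w r) →
      ∀ δ : ℝ≥0∞, 0 < δ →
      ∀ (f : EucX n → ℝ) (Df : (Fin (n+1) → ℕ) → EucX n → ℝ),
        SobolevFamily (OmSet φ) l p f Df →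
        morreyNorm p w δ Set.univ (burT φ ψ (16*(M+1)) ω f) ≤
          ENNReal.ofReal c * morreyNorm p w δ (OmSet φ) f := by
  classical
  obtain ⟨hωc, hωcs, hωsupp, hωint, -⟩ := hω
  have hp0 : (0:ℝ) < p := lt_of_lt_of_le one_pos hp
  set A : ℝ := 16*(M+1) with hAdef
  have hA0 : (0:ℝ) < A := by simp only [hAdef]; linarith
  have hA1 : (1:ℝ) ≤ A := by simp only [hAdef]; linarith
  set K : ℝ := A + 2 with hKdef
  have hK0 : (0:ℝ) < K := by linarith
  have hK1 : (1:ℝ) ≤ K := by linarith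
  obtain ⟨T, hT⟩ := St8.cover_exists (n := n) K hK0
  set N : ℝ≥0∞ := (T.card : ℝ≥0∞) with hNdef
  obtain ⟨D, hD⟩ := pow_unbounded_of_one_lt (R := ℝ) (8*M+16) one_lt_two
  set W : ℝ≥0∞ := ∫⁻ z, (‖ω z‖₊ : ℝ≥0∞) with hWdef
  have hWtop : W ≠ ⊤ := by
    have hint : Integrable ω := hωc.continuous.integrable_of_hasCompactSupport hωcs
    exact hint.hasFiniteIntegral.ne
  have hW1 : (1:ℝ≥0∞) ≤ W := by
    have h1 : ((‖(1:ℝ)‖₊ : ℝ≥0∞)) ≤ W := by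
      conv_lhs => rw [← hωint]
      exact enorm_integral_le_lintegral_enorm _
    simpa using h1
  have hW0 : W ≠ 0 := (zero_lt_one.trans_le hW1).ne'
  set CE : ℝ≥0∞ := N + 2^(p-1) * W^p * ((2*(D:ℝ≥0∞)+4) * N) with hCEdef
  have hCEtop : CE ≠ ⊤ := by
    refine ENNReal.add_ne_top.mpr ⟨ENNReal.natCast_ne_top _, ?_⟩
    refine ENNReal.mul_ne_top (ENNReal.mul_ne_top ?_ ?_) ?_
    · exact (ENNReal.rpow_lt_top_of_nonneg (by linarith) (by norm_num)).ne
    · exact (ENNReal.rpow_lt_top_of_nonneg hp0.le hWtop).ne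
    · exact ENNReal.mul_ne_top (by
        refine ENNReal.add_ne_top.mpr ⟨ENNReal.mul_ne_top (by norm_num) (ENNReal.natCast_ne_top _), by norm_num⟩)
        (ENNReal.natCast_ne_top _)
  set c : ℝ := (CE.toReal) ^ (1/p) + 1 with hcdef
  have hc0 : (0:ℝ) < c := by positivity
  have hCEc : CE ≤ (ENNReal.ofReal c)^p := by
    rw [show CE = ENNReal.ofReal (CE.toReal) from (ENNReal.ofReal_toReal hCEtop).symm,
      ENNReal.ofReal_rpow_of_nonneg hc0.le hp0.le]
    apply ENNReal.ofReal_le_ofReal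
    have h3 : ((CE.toReal)^(1/p))^p = CE.toReal := by
      rw [← Real.rpow_mul ENNReal.toReal_nonneg, one_div, inv_mul_cancel₀ hp0.ne', Real.rpow_one]
    calc CE.toReal = ((CE.toReal)^(1/p))^p := h3.symm
      _ ≤ c^p := Real.rpow_le_rpow (by positivity) (by rw [hcdef]; linarith) hp0.le
  refine ⟨c, hc0, ?_⟩
  intro φ hφ ψ hψ w hw δ hδ f Df hSob
  obtain ⟨hψ1, hψ2, hψ3, hψ4, hψ5, hψ6, -⟩ := hψ
  set Mf : ℝ≥0∞ := morreyNorm p w δ (OmSet φ) f with hMfdef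
  -- continuity and measurability of the geometry
  have hφc : Continuous φ := by
    have hlip : LipschitzWith (Real.toNNReal M) φ := by
      apply LipschitzWith.of_dist_le_mul
      intro x y
      rw [Real.dist_eq]
      refine (hφ x y).trans (mul_le_mul_of_nonneg_right ?_ dist_nonneg)
      rw [Real.coe_toNNReal']
      exact le_max_left _ _
    exact hlip.continuous
  have hΩopen : IsOpen (OmSet φ) := by
    have heq : OmSet φ = rhoN φ ⁻¹' (Set.Iio 0) := by
      ext x
      simp only [OmSet, mem_setOf_eq, mem_preimage, mem_Iio, rhoN]
      constructor <;> intro h <;> linarith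
    rw [heq]
    exact isOpen_Iio.preimage (St8.continuous_rho hφc)
  have hΩmeas : MeasurableSet (OmSet φ) := hΩopen.measurableSet
  -- measurable representative of f
  have hf_mem : MemLp f (ENNReal.ofReal p) (volume.restrict (OmSet φ)) := by
    have h0 := (hSob.2 0 (by simp)).1
    rwa [hSob.1] at h0
  have hf_aesm := hf_mem.aestronglyMeasurable
  set g : EucX n → ℝ := hf_aesm.mk f with hgdef
  have hg_sm : StronglyMeasurable g := hf_aesm.stronglyMeasurable_mk
  have hbad : volume ({x | f x ≠ g x} ∩ OmSet φ) = 0 := by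
    have h1 := hf_aesm.ae_eq_mk
    rw [Filter.EventuallyEq, ae_iff] at h1
    rwa [Measure.restrict_apply' hΩmeas] at h1
  obtain ⟨Nb, hNbsub, hNbmeas, hNb0⟩ := exists_measurable_superset_of_null hbad
  set f₀ : EucX n → ℝ := fun x => if x ∈ OmSet φ then g x else 0 with hf₀def
  have hf₀meas : Measurable f₀ := Measurable.ite hΩmeas hg_sm.measurable measurable_const
  have hf₀f : ∀ x, x ∈ OmSet φ → x ∉ Nb → f x = f₀ x := by
    intro x hx hnx
    simp only [hf₀def, if_pos hx]
    by_contra hne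
    exact hnx (hNbsub ⟨hne, hx⟩)
  -- congruence of set integrals over subsets of Ω
  have hcongr : ∀ S : Set (EucX n), MeasurableSet S →
      ∫⁻ u in S ∩ OmSet φ, ((‖f₀ u‖₊ : ℝ≥0∞))^p = ∫⁻ u in S ∩ OmSet φ, ENNReal.ofReal (|f u| ^ p) := by
    intro S hS
    apply lintegral_congr_ae
    have key : ∀ᵐ u ∂(volume.restrict (S ∩ OmSet φ)), u ∉ Nb :=
      ae_restrict_of_ae (measure_eq_zero_iff_ae_notMem.mp hNb0)
    have key2 : ∀ᵐ u ∂(volume.restrict (S ∩ OmSet φ)), u ∈ S ∩ OmSet φ :=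
      ae_restrict_mem (hS.inter hΩmeas)
    filter_upwards [key, key2] with u h1 h2
    rw [← hf₀f u h2.2 h1]
    exact St8.ofReal_abs_rpow hp0.le (f u)
  -- measurability package
  have hωmeas : Measurable fun z : EucX n => (‖ω z‖₊ : ℝ≥0∞) :=
    hωc.continuous.measurable.nnnorm.coe_nnreal_ennreal
  have hsubcont : ∀ k : ℤ, Continuous fun q : EucX n × EucX n => q.1 - St8.vvec A k q.2 :=
    fun k => continuous_fst.sub ((St8.vvec_continuous hA0.ne' k).comp continuous_snd)
  have hjoint : ∀ k : ℤ, Measurable fun q : EucX n × EucX n =>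
      ((‖f₀ (q.1 - St8.vvec A k q.2)‖₊ : ℝ≥0∞))^p * (‖ω q.2‖₊ : ℝ≥0∞) := fun k =>
    (((hf₀meas.comp (hsubcont k).measurable).nnnorm.coe_nnreal_ennreal).pow_const p).mul
      (hωmeas.comp measurable_snd)
  set jfun : ℤ → EucX n → ℝ≥0∞ := fun k y =>
    ∫⁻ z, ((‖f₀ (y - St8.vvec A k z)‖₊ : ℝ≥0∞))^p * (‖ω z‖₊ : ℝ≥0∞) with hjfundef
  have hjfun_meas : ∀ k, Measurable (jfun k) := fun k =>
    Measurable.lintegral_prod_right' (hjoint k)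
  set SS : ℤ → Set (EucX n) := fun k => Function.support (ψ k) with hSSdef
  have hSSmeas : ∀ k, MeasurableSet (SS k) := by
    intro k
    have hs : Function.support (ψ k) = (ψ k) ⁻¹' ({0}ᶜ) := by
      ext u
      simp [Function.mem_support]
    show MeasurableSet (Function.support (ψ k))
    rw [hs]
    exact ((hψ1 k).continuous.measurable) (measurableSet_singleton 0).compl
  set H2 : EucX n → ℝ≥0∞ := fun y =>
    2^(p-1) * ∑' k : ℤ, (SS k).indicator (fun y' => W^(p-1) * jfun k y') y with hH2def
  set H1 : EucX n → ℝ≥0∞ := (OmSet φ).indicator (fun y => ENNReal.ofReal (|f y| ^ p)) with hH1def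
  have hH2meas : Measurable H2 := by
    apply Measurable.const_mul
    apply Measurable.ennreal_tsum
    intro k
    exact ((hjfun_meas k).const_mul _).indicator (hSSmeas k)
  -- pointwise majorant
  have hpoint : ∀ y : EucX n,
      ENNReal.ofReal (|burT φ ψ A ω f y| ^ p) ≤ H2 y + H1 y := by
    intro y
    by_cases hyΩ : y ∈ OmSet φ
    · have hTf : burT φ ψ A ω f y = f y := by
        simp only [burT]
        rw [if_pos hyΩ]
      rw [hTf]
      have hH1y : H1 y = ENNReal.ofReal (|f y| ^ p) := indicator_of_mem hyΩ _
      rw [← hH1y]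
      exact le_add_self
    · by_cases hyG : y ∈ GSet φ
      · have hTf : burT φ ψ A ω f y = ∑' k : ℤ, ψ k y * fkfun A ω f k y := by
          simp only [burT]
          rw [if_neg hyΩ]
        have hne2 : {k : ℤ | ψ k y ≠ 0}.encard ≠ ⊤ :=
          ne_top_of_le_ne_top (by norm_num : (2:ℕ∞) ≠ ⊤) (hψ6 y)
        have hfin : {k : ℤ | ψ k y ≠ 0}.Finite := Set.encard_ne_top_iff.mp hne2
        set s : Finset ℤ := hfin.toFinset with hsdef
        have hcard : s.card ≤ 2 := by
          have h1 : (s.card : ℕ∞) ≤ 2 := by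
            rw [hsdef, ← Set.Finite.encard_eq_coe_toFinset_card hfin]
            exact hψ6 y
          exact_mod_cast h1
        have hsum : burT φ ψ A ω f y = ∑ k ∈ s, ψ k y * fkfun A ω f k y := by
          rw [hTf]
          refine tsum_eq_sum fun k hk => ?_
          have hk0 : ψ k y = 0 := by
            by_contra hc
            exact hk (hfin.mem_toFinset.mpr hc)
          rw [hk0, zero_mul]
        have habs : |burT φ ψ A ω f y| ≤ ∑ k ∈ s, ψ k y * |fkfun A ω f k y| := by
          rw [hsum]
          refine (Finset.abs_sum_le_sum_abs _ _).trans ?_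
          refine Finset.sum_le_sum fun k _ => ?_
          rw [abs_mul, abs_of_nonneg (hψ2 k y)]
        have hofr : ENNReal.ofReal (|burT φ ψ A ω f y|) ≤
            ∑ k ∈ s, ENNReal.ofReal (ψ k y * |fkfun A ω f k y|) := by
          refine (ENNReal.ofReal_le_ofReal habs).trans ?_
          rw [ENNReal.ofReal_sum_of_nonneg]
          intro k _
          exact mul_nonneg (hψ2 k y) (abs_nonneg _)
        have hstep1 : ENNReal.ofReal (|burT φ ψ A ω f y| ^ p)
            ≤ (∑ k ∈ s, ENNReal.ofReal (ψ k y * |fkfun A ω f k y|)) ^ p := by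
          rw [← St8.ofReal_abs_rpow hp0.le]
          refine ENNReal.rpow_le_rpow ?_ hp0.le
          rw [show ((‖burT φ ψ A ω f y‖₊ : ℝ≥0∞)) = ENNReal.ofReal (|burT φ ψ A ω f y|) from by
            rw [← Real.norm_eq_abs, ofReal_norm, enorm_eq_nnnorm]]
          exact hofr
        have hstep2 := St8.twoSumPow hp s hcard (fun k => ENNReal.ofReal (ψ k y * |fkfun A ω f k y|))
        have hstep3 : ∀ k ∈ s, (ENNReal.ofReal (ψ k y * |fkfun A ω f k y|)) ^ p ≤
            (SS k).indicator (fun y' => W^(p-1) * jfun k y') y := by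
          intro k hk
          have hky : ψ k y ≠ 0 := hfin.mem_toFinset.mp hk
          have hyS : y ∈ SS k := hky
          have hytGk : y ∈ tGkSet φ k := (hψ5 k).2 hyS
          have hψle : ψ k y ≤ 1 := le_hasSum (hψ3 y hyG) k (fun j _ => hψ2 j y)
          have h1 : ENNReal.ofReal (ψ k y * |fkfun A ω f k y|) ≤
              ENNReal.ofReal (|fkfun A ω f k y|) :=
            ENNReal.ofReal_le_ofReal (mul_le_of_le_one_left (abs_nonneg _) hψle)
          have hfk : fkfun A ω f k y = fkfun A ω f₀ k y := by
            rw [hAdef]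
            exact St8.fk_congr hM hφ hωsupp hNb0 hf₀f k hytGk
          have h2 : (ENNReal.ofReal (|fkfun A ω f k y|)) ^ p ≤ W^(p-1) * jfun k y := by
            rw [hfk]
            rw [show ENNReal.ofReal (|fkfun A ω f₀ k y|) = ((‖fkfun A ω f₀ k y‖₊ : ℝ≥0∞)) from by
              rw [← Real.norm_eq_abs, ofReal_norm, enorm_eq_nnnorm]]
            exact St8.fk_bound hp hωc.continuous hf₀meas hA0.ne' k y
          rw [indicator_of_mem hyS]
          exact (ENNReal.rpow_le_rpow h1 hp0.le).trans h2
        calc ENNReal.ofReal (|burT φ ψ A ω f y| ^ p)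
            ≤ (∑ k ∈ s, ENNReal.ofReal (ψ k y * |fkfun A ω f k y|)) ^ p := hstep1
          _ ≤ 2^(p-1) * ∑ k ∈ s, (ENNReal.ofReal (ψ k y * |fkfun A ω f k y|)) ^ p := hstep2
          _ ≤ 2^(p-1) * ∑ k ∈ s, (SS k).indicator (fun y' => W^(p-1) * jfun k y') y :=
              mul_le_mul_right (Finset.sum_le_sum hstep3) _
          _ ≤ 2^(p-1) * ∑' k : ℤ, (SS k).indicator (fun y' => W^(p-1) * jfun k y') y :=
              mul_le_mul_right (ENNReal.sum_le_tsum s) _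
          _ = H2 y := rfl
          _ ≤ H2 y + H1 y := le_self_add
      · have hTf : burT φ ψ A ω f y = 0 := by
          simp only [burT]
          rw [if_neg hyΩ]
          have hz : ∀ k : ℤ, ψ k y * fkfun A ω f k y = 0 := fun k => by
            rw [hψ4 y hyG k, zero_mul]
          simp [hz]
        rw [hTf]
        simp [abs_zero, Real.zero_rpow hp0.ne']
  -- the main per-ball estimate
  rw [morreyNorm]
  refine iSup_le fun x₀ => iSup_le fun _ => iSup_le fun r => iSup_le fun hr => iSup_le fun hrδ => ?_
  rw [inter_univ]
  have hwr0 : (0:ℝ) < w r := hw r hr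
  have hwne : ENNReal.ofReal (w r) ≠ 0 := by
    simp only [ne_eq, ENNReal.ofReal_eq_zero, not_le]
    linarith
  have hwtop : ENNReal.ofReal (w r) ≠ ⊤ := ENNReal.ofReal_ne_top
  -- part 1
  have hpart1 : ∫⁻ y in ball x₀ r, H1 y ≤ N * (ENNReal.ofReal (w r) * Mf^p) := by
    have h1 : ∫⁻ y in ball x₀ r, H1 y = ∫⁻ y in OmSet φ ∩ ball x₀ r, ENNReal.ofReal (|f y| ^ p) := by
      rw [hH1def, lintegral_indicator hΩmeas, Measure.restrict_restrict hΩmeas]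
    rw [h1]
    have h2 : OmSet φ ∩ ball x₀ r ⊆ ball x₀ (K*r) ∩ OmSet φ := by
      intro u hu
      exact ⟨ball_subset_ball (by nlinarith) hu.2, hu.1⟩
    calc ∫⁻ y in OmSet φ ∩ ball x₀ r, ENNReal.ofReal (|f y| ^ p)
        ≤ ∫⁻ y in ball x₀ (K*r) ∩ OmSet φ, ENNReal.ofReal (|f y| ^ p) := lintegral_mono_set h2
      _ ≤ N * (ENNReal.ofReal (w r) * Mf^p) := St8.cover_bound hp hw hK0 hT f x₀ hr hrδ
  -- part 2
  have hpart2 : ∫⁻ y in ball x₀ r, H2 y ≤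
      2^(p-1) * W^p * ((2*(D:ℝ≥0∞)+4) * (N * (ENNReal.ofReal (w r) * Mf^p))) := by
    set E : ℤ → Set (EucX n) := fun k => SS k ∩ ball x₀ r with hEdef
    have hEmeas : ∀ k, MeasurableSet (E k) := fun k => (hSSmeas k).inter measurableSet_ball
    set innr : ℤ → EucX n → ℝ≥0∞ := fun k z =>
      ∫⁻ y in E k, ((‖f₀ (y - St8.vvec A k z)‖₊ : ℝ≥0∞))^p with hinnrdef
    have hymeas : ∀ (k : ℤ) (z : EucX n),
        Measurable fun y : EucX n => ((‖f₀ (y - St8.vvec A k z)‖₊ : ℝ≥0∞))^p := fun k z =>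
      ((hf₀meas.comp (continuous_id.sub continuous_const).measurable).nnnorm.coe_nnreal_ennreal).pow_const p
    have hinnr_meas : ∀ k, Measurable fun z => innr k z := by
      intro k
      apply Measurable.lintegral_prod_right'
        (f := fun q : EucX n × EucX n => ((‖f₀ (q.2 - St8.vvec A k q.1)‖₊ : ℝ≥0∞))^p)
      exact ((hf₀meas.comp (continuous_snd.sub
        ((St8.vvec_continuous hA0.ne' k).comp continuous_fst)).measurable).nnnorm.coe_nnreal_ennreal).pow_const p
    have hH2int : ∫⁻ y in ball x₀ r, H2 y
        = 2^(p-1) * (W^(p-1) * ∑' k : ℤ, ∫⁻ y in E k, jfun k y) := by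
      calc ∫⁻ y in ball x₀ r, H2 y
          = 2^(p-1) * ∫⁻ y in ball x₀ r, ∑' k : ℤ, (SS k).indicator (fun y' => W^(p-1) * jfun k y') y :=
            lintegral_const_mul _ (Measurable.ennreal_tsum fun k =>
              ((hjfun_meas k).const_mul _).indicator (hSSmeas k))
        _ = 2^(p-1) * ∑' k : ℤ, ∫⁻ y in ball x₀ r, (SS k).indicator (fun y' => W^(p-1) * jfun k y') y := by
            rw [lintegral_tsum fun k => (((hjfun_meas k).const_mul _).indicator (hSSmeas k)).aemeasurable]
        _ = 2^(p-1) * ∑' k : ℤ, (W^(p-1) * ∫⁻ y in E k, jfun k y) := by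
            congr 1
            refine tsum_congr fun k => ?_
            rw [lintegral_indicator (hSSmeas k), Measure.restrict_restrict (hSSmeas k)]
            exact lintegral_const_mul _ (hjfun_meas k)
        _ = 2^(p-1) * (W^(p-1) * ∑' k : ℤ, ∫⁻ y in E k, jfun k y) := by rw [ENNReal.tsum_mul_left]
    have hswap : ∀ k : ℤ, ∫⁻ y in E k, jfun k y
        = ∫⁻ z, (‖ω z‖₊ : ℝ≥0∞) * innr k z := by
      intro k
      calc ∫⁻ y in E k, jfun k y
          = ∫⁻ z, ∫⁻ y in E k,
              ((‖f₀ (y - St8.vvec A k z)‖₊ : ℝ≥0∞))^p * (‖ω z‖₊ : ℝ≥0∞) ∂volume := by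
            exact lintegral_lintegral_swap (hjoint k).aemeasurable
        _ = ∫⁻ z, (‖ω z‖₊ : ℝ≥0∞) * innr k z := by
            refine lintegral_congr fun z => ?_
            rw [lintegral_mul_const'' _ (hymeas k z).aemeasurable]
            exact mul_comm _ _
    set QB : ℝ≥0∞ := N * (ENNReal.ofReal (w r) * Mf^p) with hQBdef
    have hBKΩint : ∫⁻ u in ball x₀ (K*r) ∩ OmSet φ, ((‖f₀ u‖₊ : ℝ≥0∞))^p ≤ QB := by
      rw [hcongr (ball x₀ (K*r)) measurableSet_ball]
      exact St8.cover_bound hp hw hK0 hT f x₀ hr hrδ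
    have hcaseA : ∀ z : EucX n, ω z ≠ 0 → ∀ k : ℤ, (2:ℝ)^(-k) ≤ r →
        innr k z ≤ ∫⁻ u, (St8.band φ M k).indicator (fun _ => (1:ℝ≥0∞)) u *
          ((ball x₀ (K*r) ∩ OmSet φ).indicator (fun u' => ((‖f₀ u'‖₊ : ℝ≥0∞))^p) u) := by
      intro z hz k hk
      obtain ⟨hz1, hz2⟩ := St8.mem_supp_props hωsupp hz
      have h2k : (0:ℝ) < (2:ℝ)^(-k) := zpow_pos (by norm_num) _
      have hshift := St8.lintegral_shift (hEmeas k)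
        (fun u => ((‖f₀ u‖₊ : ℝ≥0∞))^p) (St8.vvec A k z)
      have hsub : (fun u => u + St8.vvec A k z) ⁻¹' (E k) ⊆
          St8.band φ M k ∩ (ball x₀ (K*r) ∩ OmSet φ) := by
        intro u hu
        rw [mem_preimage, hEdef] at hu
        have hySV : u + St8.vvec A k z ∈ SS k := hu.1
        have hytGk : u + St8.vvec A k z ∈ tGkSet φ k := (hψ5 k).2 hySV
        have huyy : u = (u + St8.vvec A k z) - St8.vvec A k z := by abel
        have hband : u ∈ St8.band φ M k := by
          rw [huyy, hAdef]
          exact St8.shift_mem_band hM hφ k (by rw [← hAdef]; exact hytGk) hz1 hz2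
        refine ⟨hband, ?_, St8.band_subset_Om hM k hband⟩
        rw [mem_ball, dist_eq_norm]
        have hvn : ‖St8.vvec A k z‖ ≤ (1+A) * (2:ℝ)^(-k) := by
          have h := St8.norm_vvec_le hA0.le k z
          nlinarith [norm_nonneg z, mul_pos (by linarith : (0:ℝ) < 1+A) h2k]
        have hyb : ‖(u + St8.vvec A k z) - x₀‖ < r := by
          have h := hu.2
          rwa [mem_ball, dist_eq_norm] at h
        calc ‖u - x₀‖ = ‖((u + St8.vvec A k z) - x₀) - St8.vvec A k z‖ := by congr 1; abel
          _ ≤ ‖(u + St8.vvec A k z) - x₀‖ + ‖St8.vvec A k z‖ := norm_sub_le _ _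
          _ < r + (1+A) * (2:ℝ)^(-k) := by linarith
          _ ≤ r + (1+A) * r := by nlinarith
          _ ≤ K * r := by rw [hKdef]; nlinarith
      calc innr k z
          = ∫⁻ u in (fun u => u + St8.vvec A k z) ⁻¹' (E k), ((‖f₀ u‖₊ : ℝ≥0∞))^p := hshift
        _ ≤ ∫⁻ u in St8.band φ M k ∩ (ball x₀ (K*r) ∩ OmSet φ), ((‖f₀ u‖₊ : ℝ≥0∞))^p :=
            lintegral_mono_set hsub
        _ = ∫⁻ u, (St8.band φ M k ∩ (ball x₀ (K*r) ∩ OmSet φ)).indicator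
              (fun u' => ((‖f₀ u'‖₊ : ℝ≥0∞))^p) u :=
            (lintegral_indicator ((St8.measurableSet_band hφc k).inter
              (measurableSet_ball.inter hΩmeas)) _).symm
        _ = ∫⁻ u, (St8.band φ M k).indicator (fun _ => (1:ℝ≥0∞)) u *
              ((ball x₀ (K*r) ∩ OmSet φ).indicator (fun u' => ((‖f₀ u'‖₊ : ℝ≥0∞))^p) u) := by
            refine lintegral_congr fun u => ?_
            by_cases h1 : u ∈ St8.band φ M k <;> by_cases h2 : u ∈ ball x₀ (K*r) ∩ OmSet φ <;>
              simp [Set.indicator_apply, h1, h2]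
    have hsumA : ∀ z : EucX n, ω z ≠ 0 →
        (∑' k : ℤ, if (2:ℝ)^(-k) ≤ r then innr k z else 0) ≤ 3 * QB := by
      intro z hz
      have hindmeas : ∀ k : ℤ, Measurable fun u : EucX n =>
          (St8.band φ M k).indicator (fun _ => (1:ℝ≥0∞)) u *
            ((ball x₀ (K*r) ∩ OmSet φ).indicator (fun u' => ((‖f₀ u'‖₊ : ℝ≥0∞))^p) u) := by
        intro k
        exact (measurable_const.indicator (St8.measurableSet_band hφc k)).mul
          ((hf₀meas.nnnorm.coe_nnreal_ennreal.pow_const p).indicator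
            (measurableSet_ball.inter hΩmeas))
      calc (∑' k : ℤ, if (2:ℝ)^(-k) ≤ r then innr k z else 0)
          ≤ ∑' k : ℤ, ∫⁻ u, (St8.band φ M k).indicator (fun _ => (1:ℝ≥0∞)) u *
              ((ball x₀ (K*r) ∩ OmSet φ).indicator (fun u' => ((‖f₀ u'‖₊ : ℝ≥0∞))^p) u) := by
            refine ENNReal.tsum_le_tsum fun k => ?_
            split
            · exact hcaseA z hz k ‹_›
            · exact zero_le
        _ = ∫⁻ u, (∑' k : ℤ, (St8.band φ M k).indicator (fun _ => (1:ℝ≥0∞)) u) *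
              ((ball x₀ (K*r) ∩ OmSet φ).indicator (fun u' => ((‖f₀ u'‖₊ : ℝ≥0∞))^p) u) := by
            rw [← lintegral_tsum (fun k => (hindmeas k).aemeasurable)]
            congr 1
            funext u
            rw [ENNReal.tsum_mul_right]
        _ ≤ ∫⁻ u, 3 * ((ball x₀ (K*r) ∩ OmSet φ).indicator (fun u' => ((‖f₀ u'‖₊ : ℝ≥0∞))^p) u) := by
            refine lintegral_mono fun u => ?_
            exact mul_le_mul_left (St8.band_overlap hM u) _
        _ = 3 * ∫⁻ u in ball x₀ (K*r) ∩ OmSet φ, ((‖f₀ u‖₊ : ℝ≥0∞))^p := by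
            rw [lintegral_const_mul _ ((hf₀meas.nnnorm.coe_nnreal_ennreal.pow_const p).indicator
              (measurableSet_ball.inter hΩmeas)),
              lintegral_indicator (measurableSet_ball.inter hΩmeas)]
        _ ≤ 3 * QB := mul_le_mul_right hBKΩint _
    have hcaseB : ∀ z : EucX n, ω z ≠ 0 → ∀ k : ℤ, r < (2:ℝ)^(-k) → innr k z ≤ QB := by
      intro z hz k hk
      obtain ⟨hz1, hz2⟩ := St8.mem_supp_props hωsupp hz
      have hshift := St8.lintegral_shift (hEmeas k)
        (fun u => ((‖f₀ u‖₊ : ℝ≥0∞))^p) (St8.vvec A k z)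
      have hsub : (fun u => u + St8.vvec A k z) ⁻¹' (E k) ⊆
          ball (x₀ - St8.vvec A k z) (K*r) ∩ OmSet φ := by
        intro u hu
        rw [mem_preimage, hEdef] at hu
        have hytGk : u + St8.vvec A k z ∈ tGkSet φ k := (hψ5 k).2 hu.1
        have hband : u ∈ St8.band φ M k := by
          rw [show u = (u + St8.vvec A k z) - St8.vvec A k z from by abel, hAdef]
          exact St8.shift_mem_band hM hφ k (by rw [← hAdef]; exact hytGk) hz1 hz2
        refine ⟨?_, St8.band_subset_Om hM k hband⟩
        rw [mem_ball, dist_eq_norm]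
        have hyb : ‖(u + St8.vvec A k z) - x₀‖ < r := by
          have h := hu.2
          rwa [mem_ball, dist_eq_norm] at h
        calc ‖u - (x₀ - St8.vvec A k z)‖ = ‖(u + St8.vvec A k z) - x₀‖ := by congr 1; abel
          _ < r := hyb
          _ ≤ K * r := by nlinarith
      calc innr k z
          = ∫⁻ u in (fun u => u + St8.vvec A k z) ⁻¹' (E k), ((‖f₀ u‖₊ : ℝ≥0∞))^p := hshift
        _ ≤ ∫⁻ u in ball (x₀ - St8.vvec A k z) (K*r) ∩ OmSet φ, ((‖f₀ u‖₊ : ℝ≥0∞))^p :=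
            lintegral_mono_set hsub
        _ ≤ QB := by
            rw [hcongr _ measurableSet_ball]
            exact St8.cover_bound hp hw hK0 hT f _ hr hrδ
    set KB : Set ℤ := {k : ℤ | r < (2:ℝ)^(-k) ∧ (E k).Nonempty} with hKBdef
    have htkB : ∀ k : ℤ, (if r < (2:ℝ)^(-k) then ∫⁻ y in E k, jfun k y else 0)
        ≤ (if k ∈ KB then (1:ℝ≥0∞) else 0) * (W * QB) := by
      intro k
      split
      · rename_i hk
        by_cases hEk : (E k).Nonempty
        · rw [if_pos (show k ∈ KB from ⟨hk, hEk⟩), one_mul, hswap k]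
          calc ∫⁻ z, (‖ω z‖₊ : ℝ≥0∞) * innr k z
              ≤ ∫⁻ z, (‖ω z‖₊ : ℝ≥0∞) * QB := by
                refine lintegral_mono fun z => ?_
                by_cases hz : ω z = 0
                · simp [hz]
                · exact mul_le_mul_right (hcaseB z hz k hk) _
            _ = W * QB := lintegral_mul_const _ hωmeas
        · rw [not_nonempty_iff_eq_empty] at hEk
          have h0 : ∫⁻ y in E k, jfun k y = 0 := by
            have hrest : volume.restrict (E k) = 0 := by
              rw [hEk]
              exact Measure.restrict_empty
            rw [hrest, lintegral_zero_measure]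
          rw [h0]
          exact zero_le
      · simp
    have hKBcard : (∑' k : ℤ, if k ∈ KB then (1:ℝ≥0∞) else 0) ≤ 2*(D:ℝ≥0∞)+1 := by
      by_cases hne : KB.Nonempty
      · obtain ⟨k₀, hk₀⟩ := hne
        have hsub : KB ⊆ ↑(Finset.Icc (k₀-(D:ℤ)) (k₀+(D:ℤ))) := by
          intro k hk
          obtain ⟨y₀, hy₀⟩ := hk₀.2
          obtain ⟨y, hy⟩ := hk.2
          have hg0 : y₀ ∈ tGkSet φ k₀ := (hψ5 k₀).2 hy₀.1
          have hg : y ∈ tGkSet φ k := (hψ5 k).2 hy.1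
          have h1 : k - k₀ ≤ (D:ℤ) := St8.caseB_sep hM hφ hr hk.1 hg0 hy₀.2 hg hy.2 hD
          have h2 : k₀ - k ≤ (D:ℤ) := St8.caseB_sep hM hφ hr hk₀.1 hg hy.2 hg0 hy₀.2 hD
          simp only [Finset.coe_Icc, mem_Icc]
          omega
        refine (St8.tsum_ind_le_card _ hsub).trans ?_
        rw [Int.card_Icc]
        rw [show (k₀ + (D:ℤ) + 1 - (k₀ - (D:ℤ))) = 2*(D:ℤ)+1 from by ring]
        rw [show ((2*(D:ℤ)+1).toNat) = 2*D+1 from by omega]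
        push_cast
        exact le_rfl
      · rw [not_nonempty_iff_eq_empty] at hne
        simp [hne]
    have hA_total : (∑' k : ℤ, if (2:ℝ)^(-k) ≤ r then ∫⁻ y in E k, jfun k y else 0)
        ≤ W * (3 * QB) := by
      have h1 : ∀ k : ℤ, (if (2:ℝ)^(-k) ≤ r then ∫⁻ y in E k, jfun k y else 0)
          = ∫⁻ z, (‖ω z‖₊ : ℝ≥0∞) * (if (2:ℝ)^(-k) ≤ r then innr k z else 0) := by
        intro k
        split
        · exact hswap k
        · simp
      have h2meas : ∀ k : ℤ, Measurable fun z : EucX n =>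
          (‖ω z‖₊ : ℝ≥0∞) * (if (2:ℝ)^(-k) ≤ r then innr k z else 0) := by
        intro k
        refine hωmeas.mul ?_
        by_cases hk : (2:ℝ)^(-k) ≤ r
        · have he : (fun z : EucX n => if (2:ℝ)^(-k) ≤ r then innr k z else 0)
              = fun z => innr k z := by
            funext z
            rw [if_pos hk]
          rw [he]
          exact hinnr_meas k
        · have he : (fun z : EucX n => if (2:ℝ)^(-k) ≤ r then innr k z else 0)
              = fun z => (0:ℝ≥0∞) := by
            funext z
            rw [if_neg hk]
          rw [he]
          exact measurable_const
      calc (∑' k : ℤ, if (2:ℝ)^(-k) ≤ r then ∫⁻ y in E k, jfun k y else 0)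
          = ∑' k : ℤ, ∫⁻ z, (‖ω z‖₊ : ℝ≥0∞) * (if (2:ℝ)^(-k) ≤ r then innr k z else 0) :=
            tsum_congr h1
        _ = ∫⁻ z, ∑' k : ℤ, (‖ω z‖₊ : ℝ≥0∞) * (if (2:ℝ)^(-k) ≤ r then innr k z else 0) :=
            (lintegral_tsum fun k => (h2meas k).aemeasurable).symm
        _ = ∫⁻ z, (‖ω z‖₊ : ℝ≥0∞) * ∑' k : ℤ, (if (2:ℝ)^(-k) ≤ r then innr k z else 0) := by
            refine lintegral_congr fun z => ?_
            rw [ENNReal.tsum_mul_left]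
        _ ≤ ∫⁻ z, (‖ω z‖₊ : ℝ≥0∞) * (3 * QB) := by
            refine lintegral_mono fun z => ?_
            by_cases hz : ω z = 0
            · simp [hz]
            · exact mul_le_mul_right (hsumA z hz) _
        _ = W * (3 * QB) := lintegral_mul_const _ hωmeas
    have hB_total : (∑' k : ℤ, if r < (2:ℝ)^(-k) then ∫⁻ y in E k, jfun k y else 0)
        ≤ (2*(D:ℝ≥0∞)+1) * (W * QB) := by
      calc (∑' k : ℤ, if r < (2:ℝ)^(-k) then ∫⁻ y in E k, jfun k y else 0)
          ≤ ∑' k : ℤ, (if k ∈ KB then (1:ℝ≥0∞) else 0) * (W * QB) := ENNReal.tsum_le_tsum htkB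
        _ = (∑' k : ℤ, if k ∈ KB then (1:ℝ≥0∞) else 0) * (W * QB) := ENNReal.tsum_mul_right
        _ ≤ (2*(D:ℝ≥0∞)+1) * (W * QB) := mul_le_mul_left hKBcard _
    have hsplit : (∑' k : ℤ, ∫⁻ y in E k, jfun k y)
        = (∑' k : ℤ, if (2:ℝ)^(-k) ≤ r then ∫⁻ y in E k, jfun k y else 0)
          + (∑' k : ℤ, if r < (2:ℝ)^(-k) then ∫⁻ y in E k, jfun k y else 0) := by
      rw [← ENNReal.tsum_add]
      refine tsum_congr fun k => ?_
      by_cases hk : (2:ℝ)^(-k) ≤ r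
      · rw [if_pos hk, if_neg (not_lt.mpr hk), add_zero]
      · rw [if_neg hk, if_pos (lt_of_not_ge hk), zero_add]
    rw [hH2int]
    have hWp : W^(p-1) * W = W^p := by
      nth_rewrite 2 [show W = W^(1:ℝ) from (ENNReal.rpow_one W).symm]
      rw [← ENNReal.rpow_add _ _ hW0 hWtop]
      norm_num
    calc 2^(p-1) * (W^(p-1) * ∑' k : ℤ, ∫⁻ y in E k, jfun k y)
        ≤ 2^(p-1) * (W^(p-1) * (W * (3 * QB) + (2*(D:ℝ≥0∞)+1) * (W * QB))) := by
          refine mul_le_mul_right (mul_le_mul_right ?_ _) _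
          rw [hsplit]
          exact add_le_add hA_total hB_total
      _ = (W^(p-1) * W) * (2^(p-1) * ((2*(D:ℝ≥0∞)+4) * QB)) := by ring
      _ = 2^(p-1) * W^p * ((2*(D:ℝ≥0∞)+4) * QB) := by rw [hWp]; ring
  have hI : ∫⁻ y in ball x₀ r, ENNReal.ofReal (|burT φ ψ A ω f y| ^ p) ≤
      (ENNReal.ofReal c)^p * (ENNReal.ofReal (w r) * Mf^p) := by
    calc ∫⁻ y in ball x₀ r, ENNReal.ofReal (|burT φ ψ A ω f y| ^ p)
        ≤ ∫⁻ y in ball x₀ r, (H2 y + H1 y) := lintegral_mono hpoint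
      _ = (∫⁻ y in ball x₀ r, H2 y) + ∫⁻ y in ball x₀ r, H1 y := lintegral_add_left hH2meas _
      _ ≤ 2^(p-1) * W^p * ((2*(D:ℝ≥0∞)+4) * (N * (ENNReal.ofReal (w r) * Mf^p)))
          + N * (ENNReal.ofReal (w r) * Mf^p) := add_le_add hpart2 hpart1
      _ = CE * (ENNReal.ofReal (w r) * Mf^p) := by
          rw [hCEdef]
          ring
      _ ≤ (ENNReal.ofReal c)^p * (ENNReal.ofReal (w r) * Mf^p) := mul_le_mul_left hCEc _
  calc ((ENNReal.ofReal (w r))⁻¹ * ∫⁻ y in ball x₀ r, ENNReal.ofReal (|burT φ ψ A ω f y| ^ p)) ^ (1/p)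
      ≤ ((ENNReal.ofReal (w r))⁻¹ * ((ENNReal.ofReal c)^p * (ENNReal.ofReal (w r) * Mf^p))) ^ (1/p) := by
        apply ENNReal.rpow_le_rpow _ (by positivity)
        exact mul_le_mul_right hI _
    _ = ((ENNReal.ofReal c)^p * Mf^p) ^ (1/p) := by
        congr 1
        calc (ENNReal.ofReal (w r))⁻¹ * ((ENNReal.ofReal c)^p * (ENNReal.ofReal (w r) * Mf^p))
            = ((ENNReal.ofReal (w r))⁻¹ * ENNReal.ofReal (w r)) * ((ENNReal.ofReal c)^p * Mf^p) := by
              ring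
          _ = (ENNReal.ofReal c)^p * Mf^p := by
              rw [ENNReal.inv_mul_cancel hwne hwtop, one_mul]
    _ = ENNReal.ofReal c * Mf := by
        rw [← ENNReal.mul_rpow_of_nonneg _ _ hp0.le, ← ENNReal.rpow_mul,
          mul_one_div, div_self hp0.ne', ENNReal.rpow_one]
end
end

section
/- Let D > 0 and let f ∈ W^{l,p}(Ω) satisfy supp f ⊂ {x ∈ Ω : |ρ_n(x)| < D}. Then Tf(x) = 0 for every x ∈ G with ρ_n(x) > 8D; equivalently, supp Tf ∩ G ⊂ {x ∈ G : ρ_n(x) ≤ 8D}. -/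
open MeasureTheory Metric Set
open scoped ENNReal NNReal Classical

noncomputable section

variable {n : ℕ}

/-- support claim in the proof of Corollary 2.6 (ii): if
`f ∈ W^{l,p}(Ω)` has `supp f ⊆ {x ∈ Ω : |ρ_n(x)| < D}`, then `Tf(x) = 0` for every `x ∈ G`
with `ρ_n(x) > 8D`; equivalently `supp Tf ∩ G ⊆ {x ∈ G : ρ_n(x) ≤ 8D}`. -/
theorem statement10 (n : ℕ) (hn : 1 ≤ n) (M : ℝ) (hM : 0 ≤ M) (Cψ : ℝ)
    (l : ℕ) (p : ℝ) (hp : 1 ≤ p) (ω : EucX n → ℝ) (hω : KernelHyp l ω)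
    (φ : EucY n → ℝ) (hφ : ∀ x y : EucY n, |φ x - φ y| ≤ M * dist x y)
    (ψ : ℤ → EucX n → ℝ) (hψ : PartitionHyp l Cψ φ ψ)
    (D : ℝ) (hD : 0 < D)
    (f : EucX n → ℝ) (Df : (Fin (n+1) → ℕ) → EucX n → ℝ)
    (hf : SobolevFamily (OmSet φ) l p f Df)
    (hsupp : Function.support f ⊆ {x ∈ OmSet φ | |rhoN φ x| < D}) :
    (∀ x ∈ GSet φ, 8 * D < rhoN φ x → burT φ ψ (16*(M+1)) ω f x = 0) ∧
      Function.support (burT φ ψ (16*(M+1)) ω f) ∩ GSet φ ⊆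
        {x ∈ GSet φ | rhoN φ x ≤ 8 * D} := by
  obtain ⟨hω1, hω2, hωsupp, hω4, hω5⟩ := hω
  obtain ⟨hψ1, hψ2, hψ3, hψ4, hψ5, hψ6, hψ7⟩ := hψ
  have hbar : ∀ z : EucX n, ‖barX z‖ ≤ ‖z‖ := by
    intro z
    rw [EuclideanSpace.norm_eq, EuclideanSpace.norm_eq]
    apply Real.sqrt_le_sqrt
    rw [Fin.sum_univ_castSucc]
    have : (0:ℝ) ≤ ‖z (Fin.last n)‖ ^ 2 := by positivity
    simp only [barX, PiLp.toLp_apply]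
    linarith
  have main : ∀ x ∈ GSet φ, 8 * D < rhoN φ x → burT φ ψ (16*(M+1)) ω f x = 0 := by
    intro x hxG hxr
    have hxΩ : x ∉ OmSet φ := fun h => hxG (subset_closure h)
    rw [burT]
    rw [if_neg hxΩ]
    have hterm : ∀ k : ℤ, ψ k x * fkfun (16*(M+1)) ω f k x = 0 := by
      intro k
      by_cases hk : ψ k x = 0
      · simp [hk]
      · have hxk : x ∈ tGkSet φ k := (hψ5 k).2 (Function.mem_support.mpr hk)
        obtain ⟨-, hxk1, hxk2⟩ := hxk
        set t : ℝ := (2:ℝ) ^ (-k) with ht_def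
        have ht : 0 < t := zpow_pos (by norm_num) _
        have h1 : (2:ℝ) ^ (-k-2) = t / 4 := by
          rw [zpow_sub₀ (by norm_num : (2:ℝ) ≠ 0)]; norm_num
          rw [ht_def, zpow_neg]
        have h2 : (2:ℝ) ^ (-k+1) = 2 * t := by
          rw [zpow_add₀ (by norm_num : (2:ℝ) ≠ 0)]; ring
        rw [h1] at hxk1
        rw [h2] at hxk2
        have hfz : ∀ z : EucX n, f (shiftPt (16*(M+1)) k x z) * ω z = 0 := by
          intro z
          by_cases hz : ω z = 0
          · simp [hz]
          have hzs : z ∈ tsupport ω := subset_tsupport ω (Function.mem_support.mpr hz)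
          obtain ⟨hz1, hz2⟩ := hωsupp hzs
          rw [mem_closedBall_zero_iff] at hz1
          suffices hf0 : f (shiftPt (16*(M+1)) k x z) = 0 by simp [hf0]
          by_contra hf0
          obtain ⟨hyΩ, hyρ⟩ := hsupp (Function.mem_support.mpr hf0)
          set y := shiftPt (16*(M+1)) k x z with hy_def
          -- compute coordinates of y
          have hly : lastX y = lastX x - 16*(M+1) * t * lastX z := by
            simp [hy_def, lastX, shiftPt, ht_def]
          have hby : barX y = barX x - t • barX z := by
            ext i
            have hne : (Fin.castSucc i) ≠ Fin.last n := (Fin.castSucc_lt_last i).ne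
            simp [hy_def, barX, shiftPt, hne, PiLp.toLp_apply, PiLp.sub_apply, PiLp.smul_apply,
              smul_eq_mul, ht_def]
          have hdist : dist (barX x) (barX y) ≤ t := by
            rw [dist_eq_norm, hby]
            have : barX x - (barX x - t • barX z) = t • barX z := by abel
            rw [this, norm_smul]
            have h3 : ‖barX z‖ ≤ 1 := le_trans (hbar z) hz1
            have h4 : ‖t‖ = t := abs_of_pos ht
            calc ‖t‖ * ‖barX z‖ ≤ t * 1 := by
                  rw [h4]; exact mul_le_mul_of_nonneg_left h3 ht.le
              _ = t := mul_one t
          have hφb : φ (barX x) - φ (barX y) ≤ M * t := by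
            have := hφ (barX x) (barX y)
            have hMt : M * dist (barX x) (barX y) ≤ M * t :=
              mul_le_mul_of_nonneg_left hdist hM
            have := abs_le.mp ((hφ (barX x) (barX y)).trans hMt)
            linarith [this.2]
          have hρy : rhoN φ y = rhoN φ x - 16*(M+1) * t * lastX z
              + (φ (barX x) - φ (barX y)) := by
            rw [rhoN, rhoN, hly]; ring
          have hzn : 16*(M+1) * t * (1/2) ≤ 16*(M+1) * t * lastX z := by
            have : (0:ℝ) ≤ 16*(M+1) * t := by positivity
            exact mul_le_mul_of_nonneg_left hz2 this
          have habs := abs_lt.mp hyρ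
          have hMt0 : (0:ℝ) ≤ M * t := mul_nonneg hM ht.le
          nlinarith [habs.1, habs.2]
        have : fkfun (16*(M+1)) ω f k x = 0 := by
          rw [fkfun]
          simp only [hfz, integral_zero]
        simp [this]
    simp only [hterm]
    exact tsum_zero
  refine ⟨main, ?_⟩
  rintro x ⟨hxs, hxG⟩
  refine ⟨hxG, ?_⟩
  by_contra h
  push_neg at h
  exact hxs (main x hxG h)
end
end
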